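/- arXiv:2203.04557 — 9 statements merged into one kernel-verified Lean document; each statement's English description precedes it below -/
import Mathlib

section
/- If the integer linear optimization problem min{w^T x : Ax ≥ b, x ∈ ℤ^n} on a UTVPI system is feasible, then its LO relaxation is neighborhood persistent: for every optimal fractional solution x* of the LO relaxation, there exists an optimal integer solution z of the ILO problem lying in the integer neighborhood N(x*) of x*. -/
open Matrix BigOperators

/-- A UTVPI system: entries of `A` are in `{-1,0,1}` and each row has at most
two nonzero entries. -/
def IsUTVPI {m n : ℕ} (A : Matrix (Fin m) (Fin n) ℝ) : Prop :=
  (∀ i j, A i j = -1 ∨ A i j = 0 ∨ A i j = 1) ∧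
  (∀ i, Set.ncard {j | A i j ≠ 0} ≤ 2)

namespace NPaux

noncomputable def clamp (p : ℝ) (u : ℤ) : ℤ := max ⌊p⌋ (min u ⌈p⌉)

lemma floor_le_clamp (p : ℝ) (u : ℤ) : ⌊p⌋ ≤ clamp p u := le_max_left _ _

lemma clamp_le_ceil (p : ℝ) (u : ℤ) : clamp p u ≤ ⌈p⌉ := by
  have := Int.floor_le_ceil p
  unfold clamp; omega

lemma abs_clamp_lt (p : ℝ) (u : ℤ) : |(clamp p u : ℝ) - p| < 1 := by
  have h1 : (⌊p⌋ : ℝ) ≤ (clamp p u : ℝ) := by exact_mod_cast floor_le_clamp p u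
  have h2 : (clamp p u : ℝ) ≤ (⌈p⌉ : ℝ) := by exact_mod_cast clamp_le_ceil p u
  have h3 := Int.sub_one_lt_floor p
  have h4 := Int.ceil_lt_add_one p
  rw [abs_lt]; constructor <;> linarith

lemma clamp_neg (p : ℝ) (u : ℤ) : clamp (-p) (-u) = - clamp p u := by
  unfold clamp
  rw [Int.floor_neg, Int.ceil_neg]
  have := Int.floor_le_ceil p
  omega

lemma A0 {p q : ℝ} {u v c : ℤ} (h1 : (c:ℝ) ≤ p + q) (h2 : c ≤ u + v) :
    c ≤ clamp p u + clamp q v := by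
  have ha : c ≤ ⌊p⌋ + ⌈q⌉ := by
    have hp := Int.lt_floor_add_one p
    have hq := Int.le_ceil q
    have h : (c:ℝ) < (⌊p⌋:ℝ) + (⌈q⌉:ℝ) + 1 := by linarith
    exact_mod_cast Int.lt_add_one_iff.mp (by exact_mod_cast h)
  have hb : c ≤ ⌈p⌉ + ⌊q⌋ := by
    have hp := Int.le_ceil p
    have hq := Int.lt_floor_add_one q
    have h : (c:ℝ) < (⌈p⌉:ℝ) + (⌊q⌋:ℝ) + 1 := by linarith
    exact_mod_cast Int.lt_add_one_iff.mp (by exact_mod_cast h)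
  have h3 := Int.floor_le_ceil p
  have h4 := Int.floor_le_ceil q
  unfold clamp
  omega

lemma B0 {p q : ℝ} {u v c : ℤ} (h1 : p + q = (c:ℝ)) (h2 : c ≤ u + v) :
    clamp p u + clamp q v ≤ u + v := by
  have hq : q = (c:ℝ) - p := by linarith
  have ha : ⌈q⌉ = c - ⌊p⌋ := by
    rw [hq, sub_eq_add_neg, add_comm, Int.ceil_add_intCast, Int.ceil_neg]; ring
  have hb : ⌊q⌋ = c - ⌈p⌉ := by
    rw [hq, sub_eq_add_neg, add_comm, Int.floor_add_intCast, Int.floor_neg]; ring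
  have h3 := Int.floor_le_ceil p
  have h4 := Int.floor_le_ceil q
  unfold clamp
  omega

lemma A1 {p : ℝ} {u c : ℤ} (h1 : (c:ℝ) ≤ p) (h2 : c ≤ u) : c ≤ clamp p u := by
  have ha : c ≤ ⌈p⌉ := by
    have hp := Int.le_ceil p
    exact_mod_cast Int.cast_le.mp (by exact_mod_cast le_trans h1 hp : (c:ℝ) ≤ ((⌈p⌉:ℤ):ℝ))
  have h3 := Int.floor_le_ceil p
  unfold clamp
  omega

lemma B1 {p : ℝ} {u c : ℤ} (h1 : p = (c:ℝ)) (h2 : c ≤ u) : clamp p u ≤ u := by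
  have ha : ⌊p⌋ = c := by rw [h1]; exact Int.floor_intCast c
  have h3 := Int.floor_le_ceil p
  unfold clamp
  omega

lemma pair_feas {s t p q : ℝ} {u v c : ℤ} (hs : s = -1 ∨ s = 1) (ht : t = -1 ∨ t = 1)
    (h1 : (c:ℝ) ≤ s * p + t * q) (h2 : (c:ℝ) ≤ s * u + t * v) :
    (c:ℝ) ≤ s * (clamp p u : ℝ) + t * (clamp q v : ℝ) := by
  rcases hs with rfl | rfl <;> rcases ht with rfl | rfl <;>
    simp only [neg_one_mul, one_mul] at h1 h2 ⊢
  · have h2' : c ≤ -u + -v := by exact_mod_cast h2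
    have := A0 (p := -p) (q := -q) (u := -u) (v := -v) (c := c) (by push_cast; linarith) h2'
    rw [clamp_neg, clamp_neg] at this
    have : (c:ℝ) ≤ ((-clamp p u + -clamp q v : ℤ) : ℝ) := by exact_mod_cast this
    push_cast at this; linarith
  · have h2' : c ≤ -u + v := by exact_mod_cast h2
    have := A0 (p := -p) (q := q) (u := -u) (v := v) (c := c) (by push_cast; linarith) h2'
    rw [clamp_neg] at this
    have : (c:ℝ) ≤ ((-clamp p u + clamp q v : ℤ) : ℝ) := by exact_mod_cast this
    push_cast at this; linarith
  · have h2' : c ≤ u + -v := by exact_mod_cast h2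
    have := A0 (p := p) (q := -q) (u := u) (v := -v) (c := c) (by push_cast; linarith) h2'
    rw [clamp_neg] at this
    have : (c:ℝ) ≤ ((clamp p u + -clamp q v : ℤ) : ℝ) := by exact_mod_cast this
    push_cast at this; linarith
  · have h2' : c ≤ u + v := by exact_mod_cast h2
    have := A0 (p := p) (q := q) (u := u) (v := v) (c := c) h1 h2'
    have : (c:ℝ) ≤ ((clamp p u + clamp q v : ℤ) : ℝ) := by exact_mod_cast this
    push_cast at this; linarith

lemma pair_tight {s t p q : ℝ} {u v c : ℤ} (hs : s = -1 ∨ s = 1) (ht : t = -1 ∨ t = 1)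
    (h1 : s * p + t * q = (c:ℝ)) (h2 : (c:ℝ) ≤ s * u + t * v) :
    s * (clamp p u : ℝ) + t * (clamp q v : ℝ) ≤ s * u + t * v := by
  rcases hs with rfl | rfl <;> rcases ht with rfl | rfl <;>
    simp only [neg_one_mul, one_mul] at h1 h2 ⊢
  · have h2' : c ≤ -u + -v := by exact_mod_cast h2
    have := B0 (p := -p) (q := -q) (u := -u) (v := -v) (c := c) (by push_cast; linarith) h2'
    rw [clamp_neg, clamp_neg] at this
    have : ((-clamp p u + -clamp q v : ℤ) : ℝ) ≤ ((-u + -v : ℤ) : ℝ) := by exact_mod_cast this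
    push_cast at this; linarith
  · have h2' : c ≤ -u + v := by exact_mod_cast h2
    have := B0 (p := -p) (q := q) (u := -u) (v := v) (c := c) (by push_cast; linarith) h2'
    rw [clamp_neg] at this
    have : ((-clamp p u + clamp q v : ℤ) : ℝ) ≤ ((-u + v : ℤ) : ℝ) := by exact_mod_cast this
    push_cast at this; linarith
  · have h2' : c ≤ u + -v := by exact_mod_cast h2
    have := B0 (p := p) (q := -q) (u := u) (v := -v) (c := c) (by push_cast; linarith) h2'
    rw [clamp_neg] at this
    have : ((clamp p u + -clamp q v : ℤ) : ℝ) ≤ ((u + -v : ℤ) : ℝ) := by exact_mod_cast this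
    push_cast at this; linarith
  · have h2' : c ≤ u + v := by exact_mod_cast h2
    have := B0 (p := p) (q := q) (u := u) (v := v) (c := c) h1 h2'
    have : ((clamp p u + clamp q v : ℤ) : ℝ) ≤ ((u + v : ℤ) : ℝ) := by exact_mod_cast this
    push_cast at this; linarith

lemma single_feas {s p : ℝ} {u c : ℤ} (hs : s = -1 ∨ s = 1)
    (h1 : (c:ℝ) ≤ s * p) (h2 : (c:ℝ) ≤ s * u) :
    (c:ℝ) ≤ s * (clamp p u : ℝ) := by
  rcases hs with rfl | rfl <;> simp only [neg_one_mul, one_mul] at h1 h2 ⊢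
  · have h2' : c ≤ -u := by exact_mod_cast h2
    have := A1 (p := -p) (u := -u) (c := c) (by push_cast; linarith) h2'
    rw [clamp_neg] at this
    have : (c:ℝ) ≤ ((-clamp p u : ℤ) : ℝ) := by exact_mod_cast this
    push_cast at this; linarith
  · have h2' : c ≤ u := by exact_mod_cast h2
    have := A1 (p := p) (u := u) (c := c) h1 h2'
    have : (c:ℝ) ≤ ((clamp p u : ℤ) : ℝ) := by exact_mod_cast this
    push_cast at this; linarith

lemma single_tight {s p : ℝ} {u c : ℤ} (hs : s = -1 ∨ s = 1)
    (h1 : s * p = (c:ℝ)) (h2 : (c:ℝ) ≤ s * u) :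
    s * (clamp p u : ℝ) ≤ s * u := by
  rcases hs with rfl | rfl <;> simp only [neg_one_mul, one_mul] at h1 h2 ⊢
  · have h2' : c ≤ -u := by exact_mod_cast h2
    have := B1 (p := -p) (u := -u) (c := c) (by push_cast; linarith) h2'
    rw [clamp_neg] at this
    have : ((-clamp p u : ℤ) : ℝ) ≤ ((-u : ℤ) : ℝ) := by exact_mod_cast this
    push_cast at this; linarith
  · have h2' : c ≤ u := by exact_mod_cast h2
    have := B1 (p := p) (u := u) (c := c) h1 h2'
    have : ((clamp p u : ℤ) : ℝ) ≤ ((u : ℤ) : ℝ) := by exact_mod_cast this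
    push_cast at this; linarith

end NPaux
namespace NPaux

variable {m n : ℕ}

lemma row_cases (A : Matrix (Fin m) (Fin n) ℝ) (hA : IsUTVPI A) (i : Fin m) :
    (∀ l, A i l = 0) ∨
    (∃ j, (A i j = -1 ∨ A i j = 1) ∧ ∀ l, l ≠ j → A i l = 0) ∨
    (∃ j k, j ≠ k ∧ (A i j = -1 ∨ A i j = 1) ∧ (A i k = -1 ∨ A i k = 1) ∧
      ∀ l, l ≠ j → l ≠ k → A i l = 0) := by
  classical
  have hfin : {l | A i l ≠ 0}.Finite := Set.toFinite _
  have hcard : hfin.toFinset.card ≤ 2 := by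
    rw [← Set.ncard_eq_toFinset_card _ hfin]
    exact hA.2 i
  have hmem : ∀ l, l ∈ hfin.toFinset ↔ A i l ≠ 0 := fun l => by
    simp [Set.Finite.mem_toFinset]
  have hsign : ∀ l, A i l ≠ 0 → (A i l = -1 ∨ A i l = 1) := by
    intro l hl
    rcases hA.1 i l with h | h | h
    · exact Or.inl h
    · exact absurd h hl
    · exact Or.inr h
  interval_cases h : hfin.toFinset.card
  · left
    intro l
    by_contra hl
    have hmem' : l ∈ hfin.toFinset := (hmem l).mpr hl
    rw [Finset.card_eq_zero] at h
    rw [h] at hmem'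
    exact Finset.notMem_empty l hmem'
  · obtain ⟨j, hj⟩ := Finset.card_eq_one.mp h
    right; left
    refine ⟨j, hsign j ?_, ?_⟩
    · exact (hmem j).mp (by rw [hj]; exact Finset.mem_singleton_self j)
    · intro l hl
      by_contra hl0
      have : l ∈ hfin.toFinset := (hmem l).mpr hl0
      rw [hj] at this
      simp at this
      exact hl this
  · obtain ⟨j, k, hjk, hjk2⟩ := Finset.card_eq_two.mp h
    right; right
    refine ⟨j, k, hjk, hsign j ?_, hsign k ?_, ?_⟩
    · exact (hmem j).mp (by rw [hjk2]; exact Finset.mem_insert_self j _)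
    · exact (hmem k).mp (by rw [hjk2]; exact Finset.mem_insert_of_mem (Finset.mem_singleton_self k))
    · intro l hl1 hl2
      by_contra hl0
      have : l ∈ hfin.toFinset := (hmem l).mpr hl0
      rw [hjk2] at this
      simp at this
      tauto

lemma sum_row_one (A : Matrix (Fin m) (Fin n) ℝ) (i : Fin m) (j : Fin n)
    (h : ∀ l, l ≠ j → A i l = 0) (f : Fin n → ℝ) :
    ∑ l, A i l * f l = A i j * f j := by
  apply Finset.sum_eq_single
  · intro l _ hl; rw [h l hl]; ring
  · intro hj; exact absurd (Finset.mem_univ j) hj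

lemma sum_row_two (A : Matrix (Fin m) (Fin n) ℝ) (i : Fin m) (j k : Fin n) (hjk : j ≠ k)
    (h : ∀ l, l ≠ j → l ≠ k → A i l = 0) (f : Fin n → ℝ) :
    ∑ l, A i l * f l = A i j * f j + A i k * f k := by
  classical
  have h2 : ∑ l ∈ ({j, k} : Finset (Fin n)), A i l * f l = ∑ l, A i l * f l := by
    apply Finset.sum_subset (Finset.subset_univ _)
    intro l _ hl
    simp only [Finset.mem_insert, Finset.mem_singleton, not_or] at hl
    rw [h l hl.1 hl.2]; ring
  rw [← h2, Finset.sum_pair hjk]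

lemma sum_row_zero (A : Matrix (Fin m) (Fin n) ℝ) (i : Fin m)
    (h : ∀ l, A i l = 0) (f : Fin n → ℝ) :
    ∑ l, A i l * f l = 0 := by
  apply Finset.sum_eq_zero
  intro l _; rw [h l]; ring

end NPaux

namespace NPaux

lemma step {m n : ℕ} (A : Matrix (Fin m) (Fin n) ℝ) (hA : IsUTVPI A) (b : Fin m → ℤ)
    (xstar : Fin n → ℝ) (hx : ∀ i, (b i : ℝ) ≤ A.mulVec xstar i)
    (z : Fin n → ℤ) (hz : ∀ i, (b i : ℝ) ≤ A.mulVec (fun j => (z j : ℝ)) i) (i : Fin m) :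
    (b i : ℝ) ≤ A.mulVec (fun j => (clamp (xstar j) (z j) : ℝ)) i ∧
    ((b i : ℝ) = A.mulVec xstar i →
      A.mulVec (fun j => (clamp (xstar j) (z j) : ℝ)) i ≤ A.mulVec (fun j => (z j : ℝ)) i) := by
  have hmv : ∀ (f : Fin n → ℝ), A.mulVec f i = ∑ l, A i l * f l := fun f => rfl
  have hxi := hx i
  have hzi := hz i
  simp only [hmv] at hxi hzi ⊢
  rcases row_cases A hA i with h0 | ⟨j, hsj, hj⟩ | ⟨j, k, hjk, hsj, hsk, hjk0⟩
  · rw [sum_row_zero A i h0] at hxi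
    constructor
    · rw [sum_row_zero A i h0]; exact hxi
    · intro _
      rw [sum_row_zero A i h0, sum_row_zero A i h0]
  · rw [sum_row_one A i j hj] at hxi hzi
    constructor
    · rw [sum_row_one A i j hj]
      exact single_feas hsj hxi hzi
    · intro ht
      rw [sum_row_one A i j hj] at ht
      rw [sum_row_one A i j hj, sum_row_one A i j hj]
      exact single_tight hsj ht.symm hzi
  · rw [sum_row_two A i j k hjk hjk0] at hxi hzi
    constructor
    · rw [sum_row_two A i j k hjk hjk0]
      exact pair_feas hsj hsk hxi hzi
    · intro ht
      rw [sum_row_two A i j k hjk hjk0] at ht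
      rw [sum_row_two A i j k hjk hjk0, sum_row_two A i j k hjk hjk0]
      exact pair_tight hsj hsk ht.symm hzi

end NPaux


/-- Neighborhood persistency of the LO relaxation of ILO on UTVPI systems:
if the ILO problem is feasible, then for every optimal fractional solution `xstar`
there is an optimal integer solution `z` in the integer neighborhood of `xstar`. -/
theorem neighborhood_persistency
    {m n : ℕ} (A : Matrix (Fin m) (Fin n) ℝ) (hA : IsUTVPI A)
    (b : Fin m → ℤ) (w : Fin n → ℚ)
    (hfeas : ∃ z : Fin n → ℤ, ∀ i, (b i : ℝ) ≤ A.mulVec (fun j => (z j : ℝ)) i)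
    (xstar : Fin n → ℝ)
    (hxfeas : ∀ i, (b i : ℝ) ≤ A.mulVec xstar i)
    (hxopt : ∀ x : Fin n → ℝ, (∀ i, (b i : ℝ) ≤ A.mulVec x i) →
      ∑ j, (w j : ℝ) * xstar j ≤ ∑ j, (w j : ℝ) * x j) :
    ∃ z : Fin n → ℤ,
      (∀ i, (b i : ℝ) ≤ A.mulVec (fun j => (z j : ℝ)) i) ∧
      (∀ z' : Fin n → ℤ, (∀ i, (b i : ℝ) ≤ A.mulVec (fun j => (z' j : ℝ)) i) →
        ∑ j, (w j : ℝ) * (z j : ℝ) ≤ ∑ j, (w j : ℝ) * (z' j : ℝ)) ∧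
      (∀ j, |(z j : ℝ) - xstar j| < 1) := by
  classical
  obtain ⟨z₀, hz₀⟩ := hfeas
  have hmv : ∀ (f : Fin n → ℝ) (i : Fin m), A.mulVec f i = ∑ l, A i l * f l := fun f i => rfl
  -- key step: clamping any feasible integer point gives a feasible integer point
  -- with no worse objective value
  have key : ∀ z : Fin n → ℤ, (∀ i, (b i : ℝ) ≤ A.mulVec (fun j => (z j : ℝ)) i) →
      (∀ i, (b i : ℝ) ≤ A.mulVec (fun j => ((NPaux.clamp (xstar j) (z j) : ℤ) : ℝ)) i) ∧
      (∑ j, (w j : ℝ) * ((NPaux.clamp (xstar j) (z j) : ℤ) : ℝ)) ≤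
        ∑ j, (w j : ℝ) * (z j : ℝ) := by
    intro z hz
    have hstep := fun i => NPaux.step A hA b xstar hxfeas z hz i
    refine ⟨fun i => (hstep i).1, ?_⟩
    set d : Fin n → ℝ := fun j => (z j : ℝ) - ((NPaux.clamp (xstar j) (z j) : ℤ) : ℝ) with hd
    have hAd : ∀ i, A.mulVec d i =
        A.mulVec (fun j => (z j : ℝ)) i -
          A.mulVec (fun j => ((NPaux.clamp (xstar j) (z j) : ℤ) : ℝ)) i := by
      intro i
      simp only [hmv, hd]
      rw [← Finset.sum_sub_distrib]
      apply Finset.sum_congr rfl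
      intros; ring
    have hdir : ∀ i, 0 ≤ A.mulVec d i ∨ (b i : ℝ) < A.mulVec xstar i := by
      intro i
      by_cases ht : (b i : ℝ) = A.mulVec xstar i
      · left
        rw [hAd i]
        have := (hstep i).2 ht
        linarith
      · right; exact lt_of_le_of_ne (hxfeas i) ht
    have hexpand : ∀ (ε : ℝ) (i : Fin m),
        A.mulVec (fun j => xstar j + ε * d j) i = A.mulVec xstar i + ε * A.mulVec d i := by
      intro ε i
      simp only [hmv]
      rw [Finset.mul_sum, ← Finset.sum_add_distrib]
      apply Finset.sum_congr rfl
      intros; ring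
    have hexists : ∃ ε : ℝ, 0 < ε ∧
        ∀ i, (b i : ℝ) ≤ A.mulVec (fun j => xstar j + ε * d j) i := by
      set R : Finset (Fin m) := Finset.univ.filter (fun i => A.mulVec d i < 0) with hR
      by_cases hRne : R.Nonempty
      · set g : Fin m → ℝ := fun i => (A.mulVec xstar i - b i) / (-(A.mulVec d i)) with hg
        have hεpos : 0 < min 1 (R.inf' hRne g) := by
          apply lt_min one_pos
          rw [Finset.lt_inf'_iff]
          intro i hi
          have hid : A.mulVec d i < 0 := by
            simp only [hR, Finset.mem_filter] at hi; exact hi.2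
          have hslack : (b i : ℝ) < A.mulVec xstar i := by
            rcases hdir i with h | h
            · linarith
            · exact h
          exact div_pos (by linarith) (by linarith)
        refine ⟨min 1 (R.inf' hRne g), hεpos, ?_⟩
        intro i
        rw [hexpand]
        by_cases hid : A.mulVec d i < 0
        · have hiR : i ∈ R := by
            simp only [hR, Finset.mem_filter, Finset.mem_univ, true_and]; exact hid
          have hslack : (b i : ℝ) < A.mulVec xstar i := by
            rcases hdir i with h | h
            · linarith
            · exact h
          have hle : min 1 (R.inf' hRne g) ≤ g i :=
            le_trans (min_le_right _ _) (Finset.inf'_le g hiR)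
          rw [hg] at hle
          have h2 : min 1 (R.inf' hRne g) * (-(A.mulVec d i)) ≤ A.mulVec xstar i - b i := by
            rw [← le_div_iff₀ (by linarith : (0:ℝ) < -(A.mulVec d i))]
            exact hle
          nlinarith
        · push_neg at hid
          have h0 : (0:ℝ) ≤ min 1 (R.inf' hRne g) * A.mulVec d i :=
            mul_nonneg (le_of_lt hεpos) hid
          linarith [hxfeas i]
      · refine ⟨1, one_pos, ?_⟩
        intro i
        rw [hexpand]
        have hni : ¬ (A.mulVec d i < 0) := fun h => hRne ⟨i, by
          simp only [hR, Finset.mem_filter, Finset.mem_univ, true_and]; exact h⟩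
        push_neg at hni
        linarith [hxfeas i]
    obtain ⟨ε, hε, hfeasε⟩ := hexists
    have hopt := hxopt _ hfeasε
    have hsum : ∑ j, (w j : ℝ) * (xstar j + ε * d j)
        = ∑ j, (w j : ℝ) * xstar j + ε * ∑ j, (w j : ℝ) * d j := by
      rw [Finset.mul_sum, ← Finset.sum_add_distrib]
      apply Finset.sum_congr rfl
      intros; ring
    have hwd : 0 ≤ ∑ j, (w j : ℝ) * d j := by
      rw [hsum] at hopt
      by_contra hneg
      push_neg at hneg
      nlinarith
    have hsplit : ∑ j, (w j : ℝ) * d j = ∑ j, (w j : ℝ) * (z j : ℝ)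
        - ∑ j, (w j : ℝ) * ((NPaux.clamp (xstar j) (z j) : ℤ) : ℝ) := by
      rw [← Finset.sum_sub_distrib]
      apply Finset.sum_congr rfl
      intros; simp only [hd]; ring
    linarith
  -- assemble: minimize over the finite set of feasible roundings
  set F : (Fin n → Bool) → (Fin n → ℤ) :=
    fun s j => if s j then ⌈xstar j⌉ else ⌊xstar j⌋ with hF
  have hYF : ∀ z : Fin n → ℤ, ∃ s : Fin n → Bool,
      F s = fun j => NPaux.clamp (xstar j) (z j) := by
    intro z
    refine ⟨fun j => decide (NPaux.clamp (xstar j) (z j) = ⌈xstar j⌉), ?_⟩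
    funext j
    by_cases hc : NPaux.clamp (xstar j) (z j) = ⌈xstar j⌉
    · simp [hF, hc]
    · have h1 := NPaux.floor_le_clamp (xstar j) (z j)
      have h2 := NPaux.clamp_le_ceil (xstar j) (z j)
      have h3 := Int.ceil_le_floor_add_one (xstar j)
      have h4 : (decide (NPaux.clamp (xstar j) (z j) = ⌈xstar j⌉)) = false :=
        decide_eq_false hc
      simp only [hF, h4, Bool.false_eq_true, if_false]
      omega
  set T : Finset (Fin n → Bool) := Finset.univ.filter
      (fun s => ∀ i, (b i : ℝ) ≤ A.mulVec (fun j => ((F s j : ℤ) : ℝ)) i) with hT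
  have hTne : T.Nonempty := by
    obtain ⟨s₀, hs₀⟩ := hYF z₀
    refine ⟨s₀, ?_⟩
    simp only [hT, Finset.mem_filter, Finset.mem_univ, true_and]
    intro i
    rw [hs₀]
    exact (key z₀ hz₀).1 i
  obtain ⟨sm, hsmT, hsmmin⟩ :=
    T.exists_min_image (fun s => ∑ j, (w j : ℝ) * ((F s j : ℤ) : ℝ)) hTne
  have hsmfeas : ∀ i, (b i : ℝ) ≤ A.mulVec (fun j => ((F sm j : ℤ) : ℝ)) i := by
    simp only [hT, Finset.mem_filter, Finset.mem_univ, true_and] at hsmT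
    exact hsmT
  refine ⟨F sm, hsmfeas, ?_, ?_⟩
  · intro z' hz'
    obtain ⟨hfy, hwy⟩ := key z' hz'
    obtain ⟨s', hs'⟩ := hYF z'
    have hs'T : s' ∈ T := by
      simp only [hT, Finset.mem_filter, Finset.mem_univ, true_and]
      intro i
      rw [hs']
      exact hfy i
    have h1 := hsmmin s' hs'T
    have h2 : (∑ j, (w j : ℝ) * ((F s' j : ℤ) : ℝ))
        = ∑ j, (w j : ℝ) * ((NPaux.clamp (xstar j) (z' j) : ℤ) : ℝ) := by
      rw [hs']
    rw [h2] at h1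
    linarith
  · intro j
    by_cases hs : sm j
    · have : F sm j = ⌈xstar j⌉ := by simp [hF, hs]
      rw [this]
      have h1 := Int.le_ceil (xstar j)
      have h2 := Int.ceil_lt_add_one (xstar j)
      rw [abs_lt]; constructor <;> linarith
    · have : F sm j = ⌊xstar j⌋ := by simp [hF, hs]
      rw [this]
      have h1 := Int.floor_le (xstar j)
      have h2 := Int.sub_one_lt_floor (xstar j)
      rw [abs_lt]; constructor <;> linarith
end

section
/- If the integer linear optimization problem min{w^T x : Ax ≥ b, x ∈ ℤ^n} on a UTVPI system is feasible, then its LO relaxation is persistent: for every optimal fractional solution x* of the LO relaxation, there exists an optimal integer solution z* of the ILO problem such that z*_j = x*_j for every index j with x*_j ∈ ℤ. -/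
open Matrix BigOperators

section PersistencyAux

noncomputable def clmp (p : ℤ) (u : ℝ) : ℤ := max ⌊u⌋ (min p ⌈u⌉)

lemma floor_le_clmp (p : ℤ) (u : ℝ) : ⌊u⌋ ≤ clmp p u := le_max_left _ _

lemma clmp_le_ceil (p : ℤ) (u : ℝ) : clmp p u ≤ ⌈u⌉ := by
  have h := Int.floor_le_ceil u
  unfold clmp; omega

lemma clmp_of_lt (p : ℤ) (u : ℝ) (h : clmp p u < p) : clmp p u = ⌈u⌉ := by
  have h1 := Int.floor_le_ceil u
  unfold clmp at *; omega

lemma clmp_of_gt (p : ℤ) (u : ℝ) (h : p < clmp p u) : clmp p u = ⌊u⌋ := by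
  have h1 := Int.floor_le_ceil u
  unfold clmp at *; omega

lemma PP (u v : ℝ) (p q c : ℤ) (hx : (c:ℝ) ≤ u + v) (hz : (c:ℝ) ≤ (p:ℝ) + (q:ℝ)) :
    ((c:ℝ) ≤ (clmp p u : ℝ) + (clmp q v : ℝ)) ∧
    ((c:ℝ) = u + v → (c:ℝ) ≤ (u + (p:ℝ) - (clmp p u : ℝ)) + (v + (q:ℝ) - (clmp q v : ℝ))) := by
  constructor
  · rcases lt_trichotomy (clmp p u) p with h | h | h
    · -- clamp decreased at u: clmp p u = ⌈u⌉, and ⌊v⌋ ≥ c - ⌈u⌉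
      rw [clmp_of_lt p u h]
      have h2 : c - ⌈u⌉ ≤ ⌊v⌋ := by
        rw [Int.le_floor]
        push_cast
        have := Int.le_ceil u
        linarith
      have h3 : (⌊v⌋ : ℝ) ≤ (clmp q v : ℝ) := by exact_mod_cast floor_le_clmp q v
      have h2' : ((c - ⌈u⌉ : ℤ) : ℝ) ≤ (⌊v⌋ : ℝ) := by exact_mod_cast h2
      push_cast at h2'
      linarith
    · -- clmp p u = p
      rcases lt_trichotomy (clmp q v) q with h' | h' | h'
      · rw [clmp_of_lt q v h']
        have h2 : c - ⌈v⌉ ≤ ⌊u⌋ := by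
          rw [Int.le_floor]
          push_cast
          have := Int.le_ceil v
          linarith
        have h3 : (⌊u⌋ : ℝ) ≤ (clmp p u : ℝ) := by exact_mod_cast floor_le_clmp p u
        have h2' : ((c - ⌈v⌉ : ℤ) : ℝ) ≤ (⌊u⌋ : ℝ) := by exact_mod_cast h2
        push_cast at h2'
        linarith
      · rw [h, h']; exact hz
      · have : (q:ℝ) ≤ (clmp q v : ℝ) := by exact_mod_cast le_of_lt h'
        rw [h]; linarith
    · -- clamp increased at u
      have hu : (p:ℝ) ≤ (clmp p u : ℝ) := by exact_mod_cast le_of_lt h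
      rcases lt_trichotomy (clmp q v) q with h' | h' | h'
      · rw [clmp_of_lt q v h']
        have h2 : c - ⌈v⌉ ≤ ⌊u⌋ := by
          rw [Int.le_floor]
          push_cast
          have := Int.le_ceil v
          linarith
        have h3 : (⌊u⌋ : ℝ) ≤ (clmp p u : ℝ) := by exact_mod_cast floor_le_clmp p u
        have h2' : ((c - ⌈v⌉ : ℤ) : ℝ) ≤ (⌊u⌋ : ℝ) := by exact_mod_cast h2
        push_cast at h2'
        linarith
      · rw [h']; linarith
      · have : (q:ℝ) ≤ (clmp q v : ℝ) := by exact_mod_cast le_of_lt h'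
        linarith
  · intro ht
    have hzZ : c ≤ p + q := by exact_mod_cast hz
    have claim1 : ⌊u⌋ + ⌈v⌉ ≤ c := by
      have : ⌈v⌉ ≤ c - ⌊u⌋ := by
        rw [Int.ceil_le]
        push_cast
        have := Int.floor_le u
        linarith
      omega
    have claim2 : ⌈u⌉ + ⌊v⌋ ≤ c := by
      have : ⌈u⌉ ≤ c - ⌊v⌋ := by
        rw [Int.ceil_le]
        push_cast
        have := Int.floor_le v
        linarith
      omega
    have key : clmp p u + clmp q v ≤ p + q := by
      rcases lt_or_ge p (clmp p u) with h | h
      · have h1 := clmp_of_gt p u h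
        have h2 := clmp_le_ceil q v
        omega
      · rcases lt_or_ge q (clmp q v) with h' | h'
        · have h1 := clmp_of_gt q v h'
          have h2 := clmp_le_ceil p u
          omega
        · omega
    have keyR : (clmp p u : ℝ) + (clmp q v : ℝ) ≤ (p:ℝ) + (q:ℝ) := by exact_mod_cast key
    linarith

lemma clmp_neg (p : ℤ) (u : ℝ) : clmp (-p) (-u) = - clmp p u := by
  have h1 := Int.floor_le_ceil u
  unfold clmp
  rw [Int.floor_neg, Int.ceil_neg]
  omega

lemma clmp_int (p k : ℤ) (u : ℝ) (h : u = (k : ℝ)) : clmp p u = k := by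
  have h1 : ⌊u⌋ = k := by rw [h]; exact Int.floor_intCast k
  have h2 : ⌈u⌉ = k := by rw [h]; exact Int.ceil_intCast k
  unfold clmp; omega

lemma CORE (s t : ℝ) (hs : s = -1 ∨ s = 1) (ht : t = -1 ∨ t = 1)
    (u v : ℝ) (p q c : ℤ)
    (hx : (c:ℝ) ≤ s * u + t * v) (hz : (c:ℝ) ≤ s * (p:ℝ) + t * (q:ℝ)) :
    ((c:ℝ) ≤ s * (clmp p u : ℝ) + t * (clmp q v : ℝ)) ∧
    ((c:ℝ) = s * u + t * v →
      (c:ℝ) ≤ s * (u + (p:ℝ) - (clmp p u : ℝ)) + t * (v + (q:ℝ) - (clmp q v : ℝ))) := by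
  have hcastu : ∀ (a : ℤ) (r : ℝ), ((clmp (-a) (-r) : ℤ) : ℝ) = -((clmp a r : ℤ) : ℝ) := by
    intro a r
    rw [clmp_neg]; push_cast; ring
  rcases hs with rfl | rfl <;> rcases ht with rfl | rfl
  · obtain ⟨H1, H2⟩ := PP (-u) (-v) (-p) (-q) c (by linarith) (by push_cast; linarith)
    rw [hcastu, hcastu] at H1
    constructor
    · push_cast at H1 ⊢; linarith
    · intro hteq
      have := H2 (by linarith)
      rw [hcastu, hcastu] at this
      push_cast at this ⊢; linarith
  · obtain ⟨H1, H2⟩ := PP (-u) v (-p) q c (by linarith) (by push_cast; linarith)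
    rw [hcastu] at H1
    constructor
    · push_cast at H1 ⊢; linarith
    · intro hteq
      have := H2 (by linarith)
      rw [hcastu] at this
      push_cast at this ⊢; linarith
  · obtain ⟨H1, H2⟩ := PP u (-v) p (-q) c (by linarith) (by push_cast; linarith)
    rw [hcastu] at H1
    constructor
    · push_cast at H1 ⊢; linarith
    · intro hteq
      have := H2 (by linarith)
      rw [hcastu] at this
      push_cast at this ⊢; linarith
  · obtain ⟨H1, H2⟩ := PP u v p q c (by linarith) (by push_cast; linarith)
    constructor
    · push_cast at H1 ⊢; linarith
    · intro hteq
      have := H2 (by linarith)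
      push_cast at this ⊢; linarith

lemma SV (s : ℝ) (hs : s = -1 ∨ s = 1) (u : ℝ) (p c : ℤ)
    (hx : (c:ℝ) ≤ s * u) (hz : (c:ℝ) ≤ s * (p:ℝ)) :
    ((c:ℝ) ≤ s * (clmp p u : ℝ)) ∧
    ((c:ℝ) = s * u → (c:ℝ) ≤ s * (u + (p:ℝ) - (clmp p u : ℝ))) := by
  rcases hs with rfl | rfl
  · constructor
    · have h1 : ⌈u⌉ ≤ -c := by
        rw [Int.ceil_le]; push_cast; linarith
      have h2 : (clmp p u : ℝ) ≤ (⌈u⌉ : ℝ) := by exact_mod_cast clmp_le_ceil p u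
      have h1' : ((⌈u⌉:ℤ):ℝ) ≤ ((-c : ℤ):ℝ) := by exact_mod_cast h1
      push_cast at h1'
      linarith
    · intro hteq
      have hint : u = ((-c : ℤ) : ℝ) := by push_cast; linarith
      have := clmp_int p (-c) u hint
      rw [this]
      push_cast
      linarith
  · constructor
    · have h1 : c ≤ ⌊u⌋ := by
        rw [Int.le_floor]; push_cast; linarith
      have h2 : (⌊u⌋ : ℝ) ≤ (clmp p u : ℝ) := by exact_mod_cast floor_le_clmp p u
      have h1' : ((c:ℤ):ℝ) ≤ ((⌊u⌋ : ℤ):ℝ) := by exact_mod_cast h1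
      linarith
    · intro hteq
      have hint : u = ((c : ℤ) : ℝ) := by push_cast; linarith
      have := clmp_int p c u hint
      rw [this]
      push_cast
      linarith

open Finset in
lemma row_main {n : ℕ} (a : Fin n → ℝ)
    (h1 : ∀ j, a j = -1 ∨ a j = 0 ∨ a j = 1)
    (h2 : Set.ncard {j | a j ≠ 0} ≤ 2)
    (c : ℤ) (x : Fin n → ℝ) (z : Fin n → ℤ)
    (hx : (c:ℝ) ≤ ∑ j, a j * x j) (hz : (c:ℝ) ≤ ∑ j, a j * (z j : ℝ)) :
    ((c:ℝ) ≤ ∑ j, a j * (clmp (z j) (x j) : ℝ)) ∧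
    ((c:ℝ) = ∑ j, a j * x j →
      (c:ℝ) ≤ ∑ j, a j * (x j + (z j : ℝ) - (clmp (z j) (x j) : ℝ))) := by
  classical
  set S : Finset (Fin n) := Finset.univ.filter (fun j => a j ≠ 0) with hSdef
  have hsum : ∀ y : Fin n → ℝ, ∑ j, a j * y j = ∑ j ∈ S, a j * y j := by
    intro y
    rw [hSdef]
    rw [Finset.sum_filter_of_ne]
    intro j _ hne
    intro h0
    exact hne (by rw [h0, zero_mul])
  have hcard : S.card ≤ 2 := by
    have : {j | a j ≠ 0} = (S : Set (Fin n)) := by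
      ext j; simp [hSdef]
    rw [this, Set.ncard_coe_finset] at h2
    exact h2
  rw [hsum, hsum, hsum]
  rw [hsum] at hx hz
  have hmem : ∀ j ∈ S, a j = -1 ∨ a j = 1 := by
    intro j hj
    have : a j ≠ 0 := by
      rw [hSdef] at hj
      exact (Finset.mem_filter.mp hj).2
    rcases h1 j with h | h | h
    · exact Or.inl h
    · exact absurd h this
    · exact Or.inr h
  interval_cases hc : S.card
  · -- card 0
    have hS0 : S = ∅ := Finset.card_eq_zero.mp hc
    rw [hS0] at hx ⊢
    simp only [Finset.sum_empty] at hx ⊢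
    exact ⟨hx, fun _ => hx⟩
  · -- card 1
    obtain ⟨j, hj⟩ := Finset.card_eq_one.mp hc
    have hjS : j ∈ S := by rw [hj]; exact Finset.mem_singleton_self j
    rw [hj]
    simp only [Finset.sum_singleton]
    rw [hj] at hx hz
    simp only [Finset.sum_singleton] at hx hz
    exact SV (a j) (hmem j hjS) (x j) (z j) c hx hz
  · -- card 2
    obtain ⟨j, k, hjk, hS2⟩ := Finset.card_eq_two.mp hc
    have hjS : j ∈ S := by rw [hS2]; simp
    have hkS : k ∈ S := by rw [hS2]; simp
    rw [hS2]
    rw [Finset.sum_pair hjk, Finset.sum_pair hjk, Finset.sum_pair hjk]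
    rw [hS2, Finset.sum_pair hjk] at hx hz
    exact CORE (a j) (a k) (hmem j hjS) (hmem k hkS) (x j) (x k) (z j) (z k) c hx hz

open Finset in
lemma exists_int_opt {n : ℕ} (w : Fin n → ℚ) (Feas : (Fin n → ℤ) → Prop)
    (hne : ∃ z, Feas z) (B : ℝ)
    (hlb : ∀ z, Feas z → B ≤ ∑ j, (w j : ℝ) * (z j : ℝ)) :
    ∃ z0, Feas z0 ∧ ∀ z, Feas z →
      ∑ j, (w j : ℝ) * (z0 j : ℝ) ≤ ∑ j, (w j : ℝ) * (z j : ℝ) := by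
  classical
  set D : ℕ := ∏ j, (w j).den with hD
  have hDpos : 0 < D := Finset.prod_pos (fun j _ => (w j).pos)
  set wI : Fin n → ℤ := fun j => (w j).num * ((D / (w j).den : ℕ) : ℤ) with hwI
  have hkey : ∀ j, ((wI j : ℝ)) = (w j : ℝ) * (D : ℝ) := by
    intro j
    have hdvd : (w j).den ∣ D := Finset.dvd_prod_of_mem _ (Finset.mem_univ j)
    have hden : ((w j).den : ℝ) ≠ 0 := by
      exact_mod_cast (w j).den_nz
    have hcast : ((D / (w j).den : ℕ) : ℝ) = (D : ℝ) / ((w j).den : ℝ) :=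
      Nat.cast_div hdvd hden
    have hwval : ((w j) : ℝ) = ((w j).num : ℝ) / ((w j).den : ℝ) := by
      rw [Rat.cast_def]
    rw [hwI]
    rw [Int.cast_mul, Int.cast_natCast, hcast, hwval]
    field_simp
  have hsum : ∀ z : Fin n → ℤ,
      ((∑ j, wI j * z j : ℤ) : ℝ) = (D : ℝ) * ∑ j, (w j : ℝ) * (z j : ℝ) := by
    intro z
    push_cast
    rw [Finset.mul_sum]
    apply Finset.sum_congr rfl
    intro j _
    rw [hkey j]
    ring
  set P : ℤ → Prop := fun k => ∃ z, Feas z ∧ (∑ j, wI j * z j) = k with hP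
  have Hinh : ∃ k, P k := by
    obtain ⟨z, hzf⟩ := hne
    exact ⟨_, z, hzf, rfl⟩
  have Hbdd : ∃ b0 : ℤ, ∀ k, P k → b0 ≤ k := by
    refine ⟨⌈(D : ℝ) * B⌉, ?_⟩
    rintro k ⟨z, hzf, rfl⟩
    rw [Int.ceil_le, hsum z]
    have := hlb z hzf
    have hDnn : (0:ℝ) ≤ (D:ℝ) := by positivity
    nlinarith
  obtain ⟨k0, ⟨z0, hz0f, hz0v⟩, hmin⟩ := Int.exists_least_of_bdd Hbdd Hinh
  refine ⟨z0, hz0f, ?_⟩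
  intro z hzf
  have h1 : k0 ≤ ∑ j, wI j * z j := hmin _ ⟨z, hzf, rfl⟩
  have h2 : ((∑ j, wI j * z0 j : ℤ) : ℝ) ≤ ((∑ j, wI j * z j : ℤ) : ℝ) := by
    rw [hz0v]; exact_mod_cast h1
  rw [hsum, hsum] at h2
  have hDpos' : (0:ℝ) < (D:ℝ) := by positivity
  exact le_of_mul_le_mul_left h2 hDpos'

end PersistencyAux

/-- Persistency of the LO relaxation of ILO on UTVPI systems: if the ILO problem
is feasible, then for every optimal fractional solution `xstar` there is an
optimal integer solution `z` agreeing with `xstar` on every coordinate where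
`xstar` is integral. -/

theorem persistency
    {m n : ℕ} (A : Matrix (Fin m) (Fin n) ℝ) (hA : IsUTVPI A)
    (b : Fin m → ℤ) (w : Fin n → ℚ)
    (hfeas : ∃ z : Fin n → ℤ, ∀ i, (b i : ℝ) ≤ A.mulVec (fun j => (z j : ℝ)) i)
    (xstar : Fin n → ℝ)
    (hxfeas : ∀ i, (b i : ℝ) ≤ A.mulVec xstar i)
    (hxopt : ∀ x : Fin n → ℝ, (∀ i, (b i : ℝ) ≤ A.mulVec x i) →
      ∑ j, (w j : ℝ) * xstar j ≤ ∑ j, (w j : ℝ) * x j) :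
    ∃ z : Fin n → ℤ,
      (∀ i, (b i : ℝ) ≤ A.mulVec (fun j => (z j : ℝ)) i) ∧
      (∀ z' : Fin n → ℤ, (∀ i, (b i : ℝ) ≤ A.mulVec (fun j => (z' j : ℝ)) i) →
        ∑ j, (w j : ℝ) * (z j : ℝ) ≤ ∑ j, (w j : ℝ) * (z' j : ℝ)) ∧
      (∀ j, (∃ k : ℤ, xstar j = (k : ℝ)) → (z j : ℝ) = xstar j) := by
  classical
  have hmv : ∀ (y : Fin n → ℝ) (i : Fin m), A.mulVec y i = ∑ j, A i j * y j :=
    fun y i => rfl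
  -- Step 1: an optimal integer solution z0
  set Feas : (Fin n → ℤ) → Prop :=
    fun z => ∀ i, (b i : ℝ) ≤ A.mulVec (fun j => (z j : ℝ)) i with hFeas
  obtain ⟨z0, hz0f, hz0opt⟩ :=
    exists_int_opt w Feas hfeas (∑ j, (w j : ℝ) * xstar j)
      (fun z hz => hxopt _ hz)
  -- Step 2: the clamped point
  set zc : Fin n → ℤ := fun j => clmp (z0 j) (xstar j) with hzc
  set d : Fin n → ℝ := fun j => (z0 j : ℝ) - (zc j : ℝ) with hd
  -- per-row facts from row_main
  have hrow : ∀ i,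
      ((b i : ℝ) ≤ ∑ j, A i j * (zc j : ℝ)) ∧
      ((b i : ℝ) = ∑ j, A i j * xstar j →
        (b i : ℝ) ≤ ∑ j, A i j * (xstar j + (z0 j : ℝ) - (zc j : ℝ))) := by
    intro i
    have h1 := hxfeas i
    have h2 := hz0f i
    rw [hmv] at h1 h2
    exact row_main (A i) (hA.1 i) (hA.2 i) (b i) xstar z0 h1 h2
  have hzcfeas : ∀ i, (b i : ℝ) ≤ A.mulVec (fun j => (zc j : ℝ)) i := by
    intro i; rw [hmv]; exact (hrow i).1
  have htight : ∀ i, A.mulVec xstar i = (b i : ℝ) →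
      (b i : ℝ) ≤ ∑ j, A i j * (xstar j + d j) := by
    intro i hi
    have := (hrow i).2 (by rw [← hi, hmv])
    calc (b i : ℝ) ≤ ∑ j, A i j * (xstar j + (z0 j : ℝ) - (zc j : ℝ)) := this
    _ = ∑ j, A i j * (xstar j + d j) := by
        apply Finset.sum_congr rfl; intro j _; rw [hd]; ring
  -- Step 3: perturbation argument: 0 ≤ ∑ w d
  have hdnn : 0 ≤ ∑ j, (w j : ℝ) * d j := by
    obtain ⟨ε, hεpos, hyfeas⟩ : ∃ ε : ℝ, 0 < ε ∧
        ∀ i, (b i : ℝ) ≤ A.mulVec (fun j => xstar j + ε * d j) i := by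
      rcases isEmpty_or_nonempty (Fin m) with hm | hm
      · exact ⟨1, one_pos, fun i => isEmptyElim i⟩
      · set M : ℝ := 1 + ∑ j, |d j| with hM
        have hMpos : 0 < M := by
          have : 0 ≤ ∑ j, |d j| := Finset.sum_nonneg (fun j _ => abs_nonneg _)
          rw [hM]; linarith
        have habs : ∀ i, |∑ j, A i j * d j| ≤ M := by
          intro i
          calc |∑ j, A i j * d j| ≤ ∑ j, |A i j * d j| :=
                Finset.abs_sum_le_sum_abs _ _
          _ ≤ ∑ j, |d j| := by
                apply Finset.sum_le_sum
                intro j _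
                rw [abs_mul]
                have h1 : |A i j| ≤ 1 := by
                  rcases hA.1 i j with h | h | h <;> rw [h] <;> norm_num
                exact mul_le_of_le_one_left (abs_nonneg _) h1
          _ ≤ M := by rw [hM]; linarith
        set g : Fin m → ℝ := fun i =>
          if (b i : ℝ) < A.mulVec xstar i then (A.mulVec xstar i - (b i : ℝ)) / M
          else 1 with hg
        have hgpos : ∀ i, 0 < g i := by
          intro i
          rw [hg]
          dsimp only
          split_ifs with h
          · exact div_pos (by linarith) hMpos
          · exact one_pos
        set ε : ℝ := min 1 (Finset.univ.inf' Finset.univ_nonempty g) with hε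
        have hεpos : 0 < ε := by
          rw [hε]
          apply lt_min one_pos
          rw [Finset.lt_inf'_iff]
          exact fun i _ => hgpos i
        have hεle : ∀ i, ε ≤ g i := fun i =>
          le_trans (min_le_right _ _) (Finset.inf'_le _ (Finset.mem_univ i))
        refine ⟨ε, hεpos, ?_⟩
        intro i
        have hlin : A.mulVec (fun j => xstar j + ε * d j) i
            = A.mulVec xstar i + ε * ∑ j, A i j * d j := by
          rw [hmv, hmv, Finset.mul_sum, ← Finset.sum_add_distrib]
          apply Finset.sum_congr rfl
          intro j _; ring
        rw [hlin]
        by_cases hi : (b i : ℝ) < A.mulVec xstar i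
        · have hgi : g i = (A.mulVec xstar i - (b i : ℝ)) / M := by
            rw [hg]; dsimp only; rw [if_pos hi]
          have h1 : ε ≤ (A.mulVec xstar i - (b i : ℝ)) / M := hgi ▸ hεle i
          have h2 : ε * M ≤ A.mulVec xstar i - (b i : ℝ) := (le_div_iff₀ hMpos).mp h1
          have h3 := abs_le.mp (habs i)
          have h4 : ε * (-(M)) ≤ ε * ∑ j, A i j * d j :=
            mul_le_mul_of_nonneg_left h3.1 hεpos.le
          nlinarith
        · have heq : A.mulVec xstar i = (b i : ℝ) :=
            le_antisymm (not_lt.mp hi) (hxfeas i)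
          have h5 := htight i heq
          have h6 : 0 ≤ ∑ j, A i j * d j := by
            have hexp : ∑ j, A i j * (xstar j + d j)
                = A.mulVec xstar i + ∑ j, A i j * d j := by
              rw [hmv, ← Finset.sum_add_distrib]
              apply Finset.sum_congr rfl
              intro j _; ring
            rw [hexp, heq] at h5
            linarith
          have := mul_nonneg hεpos.le h6
          linarith
    have hopt' := hxopt _ hyfeas
    have hysum : ∑ j, (w j : ℝ) * (xstar j + ε * d j)
        = ∑ j, (w j : ℝ) * xstar j + ε * ∑ j, (w j : ℝ) * d j := by
      rw [Finset.mul_sum, ← Finset.sum_add_distrib]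
      apply Finset.sum_congr rfl
      intro j _; ring
    rw [hysum] at hopt'
    by_contra hneg
    have : ε * ∑ j, (w j : ℝ) * d j < 0 :=
      mul_neg_of_pos_of_neg hεpos (lt_of_not_ge hneg)
    linarith
  -- Conclusion
  refine ⟨zc, hzcfeas, ?_, ?_⟩
  · intro z' hz'
    have h1 : ∑ j, (w j : ℝ) * (z0 j : ℝ) ≤ ∑ j, (w j : ℝ) * (z' j : ℝ) :=
      hz0opt z' hz'
    have h2 : ∑ j, (w j : ℝ) * (zc j : ℝ)
        = ∑ j, (w j : ℝ) * (z0 j : ℝ) - ∑ j, (w j : ℝ) * d j := by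
      rw [← Finset.sum_sub_distrib]
      apply Finset.sum_congr rfl
      intro j _; rw [hd]; ring
    linarith
  · intro j ⟨k, hk⟩
    rw [hzc]
    simp only
    rw [clmp_int (z0 j) k (xstar j) hk, hk]
end

section
/- Let Ax ≥ b be a UTVPI system, let x* ∈ ℝ^n satisfy Ax* ≥ b, and let z* ∈ ℤ^n satisfy Az* ≥ b. Define z ∈ ℤ^n by z_j = x*_j if x*_j ∈ ℤ; z_j = ⌈x*_j⌉ if x*_j ∉ ℤ and x*_j < z*_j; and z_j = ⌊x*_j⌋ if x*_j ∉ ℤ and x*_j > z*_j. Then Az ≥ b, i.e., z is a feasible integer solution of the system. -/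
open Matrix BigOperators

/-- Feasibility of the rounded solution: given a real feasible solution `xstar`
and an integer feasible solution `zstar` of a UTVPI system `A x ≥ b`, the integer
vector `z` obtained from `xstar` by keeping integer coordinates and rounding each
non-integer coordinate towards `zstar` is again feasible. -/
theorem rounded_solution_feasible
    {m n : ℕ} (A : Matrix (Fin m) (Fin n) ℝ) (hA : IsUTVPI A)
    (b : Fin m → ℤ)
    (xstar : Fin n → ℝ) (zstar : Fin n → ℤ)
    (hx : ∀ i, (b i : ℝ) ≤ A.mulVec xstar i)
    (hzstar : ∀ i, (b i : ℝ) ≤ A.mulVec (fun j => (zstar j : ℝ)) i)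
    (z : Fin n → ℤ)
    (hzdef : ∀ j,
      ((∃ k : ℤ, xstar j = (k : ℝ)) → (z j : ℝ) = xstar j) ∧
      ((¬ ∃ k : ℤ, xstar j = (k : ℝ)) → xstar j < (zstar j : ℝ) → z j = ⌈xstar j⌉) ∧
      ((¬ ∃ k : ℤ, xstar j = (k : ℝ)) → (zstar j : ℝ) < xstar j → z j = ⌊xstar j⌋)) :
    ∀ i, (b i : ℝ) ≤ A.mulVec (fun j => (z j : ℝ)) i := by
  classical
  intro i
  obtain ⟨hA1, hA2⟩ := hA
  -- unfold mulVec everywhere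
  have hsum : ∀ v : Fin n → ℝ, A.mulVec v i = ∑ j, A i j * v j := by
    intro v; simp [Matrix.mulVec, dotProduct]
  rw [hsum]
  have hx' : (b i : ℝ) ≤ ∑ j, A i j * xstar j := by rw [← hsum]; exact hx i
  have hz' : (b i : ℝ) ≤ ∑ j, A i j * (zstar j : ℝ) := by rw [← hsum]; exact hzstar i
  -- per-coordinate key lemma
  have key : ∀ j, (A i j * xstar j ≤ A i j * (z j : ℝ)) ∨
      (A i j * (zstar j : ℝ) ≤ A i j * (z j : ℝ) ∧
        A i j * xstar j - 1 < A i j * (z j : ℝ)) := by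
    intro j
    obtain ⟨h1, h2, h3⟩ := hzdef j
    by_cases hint : ∃ k : ℤ, xstar j = (k : ℝ)
    · left; rw [h1 hint]
    · rcases lt_trichotomy (xstar j) ((zstar j : ℝ)) with hlt | heq | hgt
      · have hzj : (z j : ℝ) = (⌈xstar j⌉ : ℝ) := by rw [h2 hint hlt]
        rcases hA1 i j with ha | ha | ha
        · right
          rw [hzj, ha]
          have hc : (⌈xstar j⌉ : ℝ) ≤ (zstar j : ℝ) := by
            exact_mod_cast Int.ceil_le.mpr (by exact_mod_cast hlt.le)
          have hc2 : (⌈xstar j⌉ : ℝ) < xstar j + 1 := Int.ceil_lt_add_one _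
          constructor <;> nlinarith
        · left; rw [ha]; simp
        · left; rw [hzj, ha]
          have := Int.le_ceil (xstar j); nlinarith
      · exact absurd ⟨zstar j, heq⟩ hint
      · have hzj : (z j : ℝ) = (⌊xstar j⌋ : ℝ) := by rw [h3 hint hgt]
        rcases hA1 i j with ha | ha | ha
        · left; rw [hzj, ha]
          have := Int.floor_le (xstar j); nlinarith
        · left; rw [ha]; simp
        · right
          rw [hzj, ha]
          have hf : (zstar j : ℝ) ≤ (⌊xstar j⌋ : ℝ) := by
            exact_mod_cast Int.le_floor.mpr (by exact_mod_cast hgt.le)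
          have hf2 : xstar j - 1 < (⌊xstar j⌋ : ℝ) := Int.sub_one_lt_floor _
          constructor <;> nlinarith
  -- good predicate
  set good : Fin n → Prop := fun j => A i j * xstar j ≤ A i j * (z j : ℝ) with hgood
  -- the row sum over z is an integer
  set N : ℤ := ∑ j, (if A i j = 1 then z j else if A i j = -1 then - z j else 0) with hN
  have hNval : ∑ j, A i j * (z j : ℝ) = (N : ℝ) := by
    rw [hN]
    push_cast
    apply Finset.sum_congr rfl
    intro j _
    rcases hA1 i j with ha | ha | ha <;> norm_num [ha]
  by_cases hall : ∀ j, good j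
  · calc (b i : ℝ) ≤ ∑ j, A i j * xstar j := hx'
      _ ≤ ∑ j, A i j * (z j : ℝ) := Finset.sum_le_sum fun j _ => hall j
  · push_neg at hall
    obtain ⟨j0, hj0⟩ := hall
    by_cases hone : ∀ j, j ≠ j0 → good j
    · -- exactly one bad coordinate: use strict bound + integrality
      have hbad0 := (key j0).resolve_left hj0
      have hlt : ∑ j, (A i j * xstar j - A i j * (z j : ℝ)) <
          ∑ j, (if j = j0 then (1 : ℝ) else 0) := by
        apply Finset.sum_lt_sum
        · intro j _
          by_cases hj : j = j0
          · subst hj; simp; linarith [hbad0.2]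
          · simp [hj]; linarith [hone j hj]
        · exact ⟨j0, Finset.mem_univ _, by simp; linarith [hbad0.2]⟩
      rw [Finset.sum_sub_distrib] at hlt
      simp only [Finset.sum_ite_eq' Finset.univ j0, Finset.mem_univ, if_true] at hlt
      have hgt : (b i : ℝ) - 1 < ∑ j, A i j * (z j : ℝ) := by linarith
      rw [hNval] at hgt ⊢
      have h' : (b i : ℤ) - 1 < N := by exact_mod_cast hgt
      have : (b i : ℤ) ≤ N := by omega
      exact_mod_cast this
    · -- two bad coordinates: all nonzero columns bad, use zstar feasibility
      push_neg at hone
      obtain ⟨j1, hj1ne, hj1⟩ := hone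
      have hbad0 := (key j0).resolve_left hj0
      have hbad1 := (key j1).resolve_left hj1
      have hz0 : A i j0 ≠ 0 := by
        intro h; apply hj0; rw [hgood]; simp [h]
      have hz1 : A i j1 ≠ 0 := by
        intro h; apply hj1; rw [hgood]; simp [h]
      -- any other column is zero
      have hzero : ∀ j, j ≠ j0 → j ≠ j1 → A i j = 0 := by
        intro j hne0 hne1
        by_contra hne
        have hsub : ({j0, j1, j} : Finset (Fin n)) ⊆
            Finset.univ.filter (fun j => A i j ≠ 0) := by
          intro x hx
          simp only [Finset.mem_insert, Finset.mem_singleton] at hx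
          rcases hx with rfl | rfl | rfl <;> simp [hz0, hz1, hne]
        have hc3 : ({j0, j1, j} : Finset (Fin n)).card = 3 := by
          rw [Finset.card_insert_of_notMem (by simp [hj1ne.symm, Ne.symm hne0]),
            Finset.card_insert_of_notMem (by simp [Ne.symm hne1])]
          simp
        have hset : {j | A i j ≠ 0} = ↑(Finset.univ.filter (fun j => A i j ≠ 0)) := by
          ext x; simp
        have hcard : (Finset.univ.filter (fun j => A i j ≠ 0)).card ≤ 2 := by
          have := hA2 i
          rwa [hset, Set.ncard_coe_finset] at this
        have := Finset.card_le_card hsub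
        omega
      calc (b i : ℝ) ≤ ∑ j, A i j * (zstar j : ℝ) := hz'
        _ ≤ ∑ j, A i j * (z j : ℝ) := by
            apply Finset.sum_le_sum
            intro j _
            by_cases h0 : j = j0
            · subst h0; exact hbad0.1
            by_cases h1 : j = j1
            · subst h1; exact hbad1.1
            · rw [hzero j h0 h1]; simp
end

section
/- Consider the ILO problem min{w^T x : Ax ≥ b, x ∈ ℤ^n} on a UTVPI system with w ∈ ℚ^n. Let x* be an optimal fractional solution of its LO relaxation and let z* be an optimal integer solution. Define z ∈ ℤ^n by z_j = x*_j if x*_j ∈ ℤ; z_j = ⌈x*_j⌉ if x*_j ∉ ℤ and x*_j < z*_j; and z_j = ⌊x*_j⌋ if x*_j ∉ ℤ and x*_j > z*_j. Then w^T z ≤ w^T z*; consequently z is also an optimal integer solution. -/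
open Matrix BigOperators

def Pabc (s t r : ℝ) : Prop :=
  t = s ∨ (s < t ∧ t ≤ r ∧ t < s + 1) ∨ (r ≤ t ∧ t < s ∧ s - 1 < t)

lemma Pabc_zero : Pabc 0 ((0:ℤ):ℝ) 0 := Or.inl (by norm_num)

lemma int_step1 (b K : ℤ) (h : (b:ℝ) - 1 < (K:ℝ)) : (b:ℝ) ≤ (K:ℝ) := by
  have h' : b - 1 < K := by exact_mod_cast (by push_cast; linarith : ((b - 1 : ℤ):ℝ) < (K:ℝ))
  exact_mod_cast (by omega : b ≤ K)

lemma int_step2 (b K : ℤ) (h : (K:ℝ) < (b:ℝ) + 1) : (K:ℝ) ≤ (b:ℝ) := by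
  have h' : K < b + 1 := by exact_mod_cast (by push_cast; linarith : (K:ℝ) < ((b + 1 : ℤ):ℝ))
  exact_mod_cast (by omega : K ≤ b)

lemma two1 (b k1 k2 : ℤ) (s1 r1 s2 r2 : ℝ)
    (h1 : Pabc s1 (k1:ℝ) r1) (h2 : Pabc s2 (k2:ℝ) r2)
    (hs : (b:ℝ) ≤ s1 + s2) (hr : (b:ℝ) ≤ r1 + r2) :
    (b:ℝ) ≤ (k1:ℝ) + (k2:ℝ) := by
  have key : (b:ℝ) - 1 < (k1:ℝ) + (k2:ℝ) → (b:ℝ) ≤ (k1:ℝ) + (k2:ℝ) := by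
    intro h
    have h2' := int_step1 b (k1 + k2) (by push_cast; linarith)
    push_cast at h2'; linarith
  rcases h1 with h1 | ⟨ha1, hb1, hc1⟩ | ⟨ha1, hb1, hc1⟩ <;>
  rcases h2 with h2 | ⟨ha2, hb2, hc2⟩ | ⟨ha2, hb2, hc2⟩ <;>
  first
  | linarith
  | (apply key; linarith)

lemma two2 (b k1 k2 : ℤ) (s1 r1 s2 r2 : ℝ)
    (h1 : Pabc s1 (k1:ℝ) r1) (h2 : Pabc s2 (k2:ℝ) r2)
    (hs : s1 + s2 ≤ (b:ℝ)) (hr : (b:ℝ) ≤ r1 + r2) :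
    (k1:ℝ) + (k2:ℝ) ≤ r1 + r2 := by
  have key : (k1:ℝ) + (k2:ℝ) < (b:ℝ) + 1 → (k1:ℝ) + (k2:ℝ) ≤ r1 + r2 := by
    intro h
    have h2' := int_step2 b (k1 + k2) (by push_cast; linarith)
    push_cast at h2'; linarith
  rcases h1 with h1 | ⟨ha1, hb1, hc1⟩ | ⟨ha1, hb1, hc1⟩ <;>
  rcases h2 with h2 | ⟨ha2, hb2, hc2⟩ | ⟨ha2, hb2, hc2⟩ <;>
  first
  | linarith
  | (apply key; linarith)

lemma coord (a x : ℝ) (zz zs : ℤ) (ha : a = -1 ∨ a = 1)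
    (h1 : (∃ k : ℤ, x = (k:ℝ)) → (zz:ℝ) = x)
    (h2 : (¬ ∃ k : ℤ, x = (k:ℝ)) → x < (zs:ℝ) → zz = ⌈x⌉)
    (h3 : (¬ ∃ k : ℤ, x = (k:ℝ)) → (zs:ℝ) < x → zz = ⌊x⌋) :
    ∃ kt : ℤ, (kt:ℝ) = a * (zz:ℝ) ∧ Pabc (a * x) (kt:ℝ) (a * (zs:ℝ)) := by
  by_cases hint : ∃ k : ℤ, x = (k:ℝ)
  · have hz := h1 hint
    rcases ha with h | h
    · exact ⟨-zz, by rw [h]; push_cast; ring,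
        Or.inl (by rw [h]; push_cast; rw [hz]; ring)⟩
    · exact ⟨zz, by rw [h]; ring, Or.inl (by rw [h, hz]; ring)⟩
  · rcases lt_trichotomy x (zs:ℝ) with hlt | heq | hgt
    · have hz := h2 hint hlt
      have hle : x ≤ ((⌈x⌉:ℤ):ℝ) := Int.le_ceil x
      have hne : x ≠ ((⌈x⌉:ℤ):ℝ) := fun h => hint ⟨⌈x⌉, h⟩
      have hlt1 : x < ((⌈x⌉:ℤ):ℝ) := lt_of_le_of_ne hle hne
      have hup : ((⌈x⌉:ℤ):ℝ) < x + 1 := Int.ceil_lt_add_one x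
      have hcz : ((⌈x⌉:ℤ):ℝ) ≤ (zs:ℝ) := by exact_mod_cast Int.ceil_le.mpr hlt.le
      rcases ha with h | h
      · refine ⟨-⌈x⌉, by rw [h, hz]; push_cast; ring,
          Or.inr (Or.inr ⟨?_, ?_, ?_⟩)⟩ <;> rw [h] <;> push_cast <;> linarith
      · refine ⟨⌈x⌉, by rw [h, hz]; push_cast; ring,
          Or.inr (Or.inl ⟨?_, ?_, ?_⟩)⟩ <;> rw [h] <;> push_cast <;> linarith
    · exact absurd ⟨zs, heq⟩ hint
    · have hz := h3 hint hgt
      have hle : ((⌊x⌋:ℤ):ℝ) ≤ x := Int.floor_le x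
      have hne : x ≠ ((⌊x⌋:ℤ):ℝ) := fun h => hint ⟨⌊x⌋, h⟩
      have hlt1 : ((⌊x⌋:ℤ):ℝ) < x := lt_of_le_of_ne hle (Ne.symm hne)
      have hdn : x - 1 < ((⌊x⌋:ℤ):ℝ) := by
        have := Int.lt_floor_add_one x; linarith
      have hfz : (zs:ℝ) ≤ ((⌊x⌋:ℤ):ℝ) := by exact_mod_cast Int.le_floor.mpr hgt.le
      rcases ha with h | h
      · refine ⟨-⌊x⌋, by rw [h, hz]; push_cast; ring,
          Or.inr (Or.inl ⟨?_, ?_, ?_⟩)⟩ <;> rw [h] <;> push_cast <;> linarith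
      · refine ⟨⌊x⌋, by rw [h, hz]; push_cast; ring,
          Or.inr (Or.inr ⟨?_, ?_, ?_⟩)⟩ <;> rw [h] <;> push_cast <;> linarith

lemma row_lemma {n : ℕ} (a : Fin n → ℝ) (b : ℤ)
    (x : Fin n → ℝ) (zz zs : Fin n → ℤ)
    (hcard : Set.ncard {j | a j ≠ 0} ≤ 2)
    (hcoord : ∀ j, a j ≠ 0 → ∃ kt : ℤ, (kt:ℝ) = a j * (zz j : ℝ) ∧
      Pabc (a j * x j) (kt:ℝ) (a j * (zs j : ℝ)))
    (hs : (b:ℝ) ≤ ∑ j, a j * x j) (hr : (b:ℝ) ≤ ∑ j, a j * (zs j : ℝ)) :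
    ((b:ℝ) ≤ ∑ j, a j * (zz j : ℝ)) ∧
    (∑ j, a j * x j ≤ (b:ℝ) → ∑ j, a j * (zz j : ℝ) ≤ ∑ j, a j * (zs j : ℝ)) := by
  classical
  set F : Finset (Fin n) := Finset.univ.filter (fun j => a j ≠ 0) with hFdef
  have hFsum : ∀ c : Fin n → ℝ, ∑ j, a j * c j = ∑ j ∈ F, a j * c j := by
    intro c
    rw [hFdef]
    symm
    apply Finset.sum_filter_of_ne
    intro j _ h h0
    exact h (by rw [h0, zero_mul])
  have hset : {j | a j ≠ 0} = (F : Set (Fin n)) := by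
    ext j; simp [hFdef]
  rw [hset, Set.ncard_coe_finset] at hcard
  rw [hFsum] at hs hr
  rw [hFsum x, hFsum (fun j => (zz j : ℝ)), hFsum (fun j => (zs j : ℝ))]
  have hc2 : F.card = 0 ∨ F.card = 1 ∨ F.card = 2 := by omega
  rcases hc2 with hc | hc | hc
  · have hF0 : F = ∅ := Finset.card_eq_zero.mp hc
    rw [hF0] at hs hr ⊢
    simp only [Finset.sum_empty] at hs hr ⊢
    exact ⟨hs, fun _ => le_refl 0⟩
  · obtain ⟨p, hp⟩ := Finset.card_eq_one.mp hc
    have hap : a p ≠ 0 := by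
      have hm : p ∈ F := by rw [hp]; exact Finset.mem_singleton_self p
      exact (Finset.mem_filter.mp hm).2
    obtain ⟨k, hk, hP⟩ := hcoord p hap
    rw [hp] at hs hr ⊢
    simp only [Finset.sum_singleton] at hs hr ⊢
    constructor
    · have := two1 b k 0 (a p * x p) (a p * (zs p:ℝ)) 0 0 hP Pabc_zero
        (by linarith) (by linarith)
      push_cast at this
      linarith [hk]
    · intro hle
      have := two2 b k 0 (a p * x p) (a p * (zs p:ℝ)) 0 0 hP Pabc_zero
        (by linarith) (by linarith)
      push_cast at this
      linarith [hk]
  · obtain ⟨p, q, hpq, hF2⟩ := Finset.card_eq_two.mp hc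
    have hap : a p ≠ 0 := by
      have hm : p ∈ F := by rw [hF2]; exact Finset.mem_insert_self p _
      exact (Finset.mem_filter.mp hm).2
    have haq : a q ≠ 0 := by
      have hm : q ∈ F := by rw [hF2]; exact Finset.mem_insert_of_mem (Finset.mem_singleton_self q)
      exact (Finset.mem_filter.mp hm).2
    obtain ⟨k1, hk1, hP1⟩ := hcoord p hap
    obtain ⟨k2, hk2, hP2⟩ := hcoord q haq
    rw [hF2] at hs hr ⊢
    simp only [Finset.sum_pair hpq] at hs hr ⊢
    constructor
    · have := two1 b k1 k2 (a p * x p) (a p * (zs p:ℝ)) (a q * x q) (a q * (zs q:ℝ))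
        hP1 hP2 hs hr
      linarith [hk1, hk2]
    · intro hle
      have := two2 b k1 k2 (a p * x p) (a p * (zs p:ℝ)) (a q * x q) (a q * (zs q:ℝ))
        hP1 hP2 hle hr
      linarith [hk1, hk2]

/-- Optimality of the rounded solution: if `xstar` is an optimal fractional
solution and `zstar` an optimal integer solution of an ILO problem on a UTVPI
system, then the integer vector `z` obtained from `xstar` by keeping integer
coordinates and rounding each non-integer coordinate towards `zstar` satisfies
`wᵀ z ≤ wᵀ zstar`; consequently `z` is also an optimal integer solution. -/
theorem rounded_solution_optimal
    {m n : ℕ} (A : Matrix (Fin m) (Fin n) ℝ) (hA : IsUTVPI A)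
    (b : Fin m → ℤ) (w : Fin n → ℚ)
    (xstar : Fin n → ℝ)
    (hxfeas : ∀ i, (b i : ℝ) ≤ A.mulVec xstar i)
    (hxopt : ∀ x : Fin n → ℝ, (∀ i, (b i : ℝ) ≤ A.mulVec x i) →
      ∑ j, (w j : ℝ) * xstar j ≤ ∑ j, (w j : ℝ) * x j)
    (zstar : Fin n → ℤ)
    (hzfeas : ∀ i, (b i : ℝ) ≤ A.mulVec (fun j => (zstar j : ℝ)) i)
    (hzopt : ∀ z' : Fin n → ℤ, (∀ i, (b i : ℝ) ≤ A.mulVec (fun j => (z' j : ℝ)) i) →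
      ∑ j, (w j : ℝ) * (zstar j : ℝ) ≤ ∑ j, (w j : ℝ) * (z' j : ℝ))
    (z : Fin n → ℤ)
    (hzdef : ∀ j,
      ((∃ k : ℤ, xstar j = (k : ℝ)) → (z j : ℝ) = xstar j) ∧
      ((¬ ∃ k : ℤ, xstar j = (k : ℝ)) → xstar j < (zstar j : ℝ) → z j = ⌈xstar j⌉) ∧
      ((¬ ∃ k : ℤ, xstar j = (k : ℝ)) → (zstar j : ℝ) < xstar j → z j = ⌊xstar j⌋)) :
    (∑ j, (w j : ℝ) * (z j : ℝ) ≤ ∑ j, (w j : ℝ) * (zstar j : ℝ)) ∧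
    (∀ i, (b i : ℝ) ≤ A.mulVec (fun j => (z j : ℝ)) i) ∧
    (∀ z' : Fin n → ℤ, (∀ i, (b i : ℝ) ≤ A.mulVec (fun j => (z' j : ℝ)) i) →
      ∑ j, (w j : ℝ) * (z j : ℝ) ≤ ∑ j, (w j : ℝ) * (z' j : ℝ)) := by
  classical
  have hmv : ∀ (c : Fin n → ℝ) (i : Fin m), A.mulVec c i = ∑ j, A i j * c j := by
    intro c i
    rfl
  -- per-row results
  have hrow : ∀ i : Fin m,
      ((b i : ℝ) ≤ ∑ j, A i j * (z j : ℝ)) ∧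
      (∑ j, A i j * xstar j ≤ (b i : ℝ) →
        ∑ j, A i j * (z j : ℝ) ≤ ∑ j, A i j * (zstar j : ℝ)) := by
    intro i
    apply row_lemma (A i) (b i) xstar z zstar (hA.2 i)
    · intro j hj
      have ha : A i j = -1 ∨ A i j = 1 := by
        rcases hA.1 i j with h | h | h
        · exact Or.inl h
        · exact absurd h hj
        · exact Or.inr h
      exact coord (A i j) (xstar j) (z j) (zstar j) ha
        (hzdef j).1 (hzdef j).2.1 (hzdef j).2.2
    · rw [← hmv]; exact hxfeas i
    · rw [← hmv]; exact hzfeas i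
  -- feasibility of z (part 2)
  have part2 : ∀ i, (b i : ℝ) ≤ A.mulVec (fun j => (z j : ℝ)) i := by
    intro i
    rw [hmv]
    exact (hrow i).1
  -- direction d and the epsilon argument
  set d : Fin n → ℝ := fun j => (zstar j : ℝ) - (z j : ℝ) with hd
  set g : Fin m → ℝ := fun i => A.mulVec d i with hg
  have hgsub : ∀ i, g i = ∑ j, A i j * (zstar j : ℝ) - ∑ j, A i j * (z j : ℝ) := by
    intro i
    rw [hg]
    dsimp only
    rw [hmv, ← Finset.sum_sub_distrib]
    apply Finset.sum_congr rfl
    intro j _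
    rw [hd]
    ring
  have hgd : ∀ i, g i < 0 → (b i : ℝ) < A.mulVec xstar i := by
    intro i hgi
    by_contra hcon
    push_neg at hcon
    have htight : ∑ j, A i j * xstar j ≤ (b i : ℝ) := by rw [← hmv]; exact hcon
    have := (hrow i).2 htight
    rw [hgsub i] at hgi
    linarith
  set f : Fin m → ℝ :=
    fun i => if g i < 0 then (A.mulVec xstar i - (b i : ℝ)) / (-(g i)) else 1 with hf
  set T : Finset ℝ := insert 1 (Finset.image f Finset.univ) with hT
  have hTne : T.Nonempty := Finset.insert_nonempty _ _
  set ε : ℝ := T.min' hTne with he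
  have hεpos : 0 < ε := by
    rw [he, Finset.lt_min'_iff]
    intro y hy
    rw [hT, Finset.mem_insert] at hy
    rcases hy with rfl | hy
    · norm_num
    · obtain ⟨i, _, rfl⟩ := Finset.mem_image.mp hy
      rw [hf]
      dsimp only
      by_cases hgi : g i < 0
      · rw [if_pos hgi]
        have hbi := hgd i hgi
        exact div_pos (by linarith) (by linarith)
      · rw [if_neg hgi]; norm_num
  have hεle : ∀ i, ε ≤ f i := fun i =>
    Finset.min'_le _ _ (Finset.mem_insert_of_mem (Finset.mem_image_of_mem f (Finset.mem_univ i)))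
  have hfeps : ∀ i, (b i : ℝ) ≤ A.mulVec (fun j => xstar j + ε * d j) i := by
    intro i
    have hlin : A.mulVec (fun j => xstar j + ε * d j) i
        = A.mulVec xstar i + ε * g i := by
      rw [hmv, hmv, hg]
      dsimp only
      rw [hmv, Finset.mul_sum, ← Finset.sum_add_distrib]
      apply Finset.sum_congr rfl
      intro j _
      ring
    rw [hlin]
    by_cases hgi : g i < 0
    · have hfle := hεle i
      rw [hf] at hfle
      dsimp only at hfle
      rw [if_pos hgi] at hfle
      have h2 : ε * (-(g i)) ≤ A.mulVec xstar i - (b i : ℝ) :=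
        (le_div_iff₀ (by linarith : (0:ℝ) < -(g i))).mp hfle
      have h3 : ε * (-(g i)) = -(ε * g i) := by ring
      linarith
    · have h0 : 0 ≤ ε * g i := mul_nonneg hεpos.le (not_lt.mp hgi)
      linarith [hxfeas i]
  have hxle := hxopt _ hfeps
  have hsum2 : ∑ j, (w j : ℝ) * (xstar j + ε * d j)
      = (∑ j, (w j : ℝ) * xstar j) + ε * ∑ j, (w j : ℝ) * d j := by
    rw [Finset.mul_sum, ← Finset.sum_add_distrib]
    apply Finset.sum_congr rfl
    intro j _
    ring
  rw [hsum2] at hxle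
  have hd0 : 0 ≤ ∑ j, (w j : ℝ) * d j :=
    le_of_mul_le_mul_left (by linarith : ε * 0 ≤ ε * ∑ j, (w j : ℝ) * d j) hεpos
  have hdiff : ∑ j, (w j : ℝ) * d j
      = ∑ j, (w j : ℝ) * (zstar j : ℝ) - ∑ j, (w j : ℝ) * (z j : ℝ) := by
    rw [← Finset.sum_sub_distrib]
    apply Finset.sum_congr rfl
    intro j _
    rw [hd]
    ring
  have part1 : ∑ j, (w j : ℝ) * (z j : ℝ) ≤ ∑ j, (w j : ℝ) * (zstar j : ℝ) := by
    rw [hdiff] at hd0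
    linarith
  refine ⟨part1, part2, ?_⟩
  intro z' hz'
  exact le_trans part1 (hzopt z' hz')
end

section
/- Consider the ILO problem: minimize 3x₁ + x₂ subject to x₁ + x₂ + x₃ ≥ 2, x₁ − x₃ ≥ 0, −x₂ ≥ −1, x ∈ ℤ³. The point (1/2, 1, 1/2) is an optimal fractional solution of its LO relaxation (with optimal value 5/2), the optimal value of the ILO problem is 3 (attained at (1,0,1)), and the minimum of 3x₁ + x₂ over integer feasible solutions with x₂ = 1 is 4. In particular, no optimal integer solution z satisfies z₂ = 1, so the LO relaxation of this ILO problem (whose constraint matrix has a row with three nonzero entries, all equal to 1) is not persistent. -/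
/-!
Adding the first two constraints gives `2 x₁ + x₂ ≥ 2`, and with `x₂ ≤ 1` this yields
`x₁ ≥ 1/2`. Over the reals this is all one gets, and the combination
`3 x₁ + x₂ = (3/2)(2 x₁ + x₂) - (1/2) x₂ ≥ 5/2` certifies optimality of `(1/2, 1, 1/2)`.
Over the integers it rounds up to `x₁ ≥ 1`, so `3 x₁ + x₂ ≥ x₁ + 2 ≥ 3`, with equality
only at `x₂ = 0`; at `x₂ = 1` the objective is at least `3 + 1 = 4`.
-/

/-- `x 0, x 1, x 2` are the paper's `x₁, x₂, x₃`. -/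
def Feasible {R : Type*} [AddGroupWithOne R] [LE R] (x : Fin 3 → R) : Prop :=
  x 0 + x 1 + x 2 ≥ 2 ∧ x 0 - x 2 ≥ 0 ∧ -x 1 ≥ -1

section Relaxation

variable {K : Type*} [Field K] [LinearOrder K] [IsStrictOrderedRing K]

theorem feasible_half_one_half : Feasible (![1 / 2, 1, 1 / 2] : Fin 3 → K) := by
  norm_num [Feasible, Matrix.cons_val_two]

theorem Feasible.five_halves_le {x : Fin 3 → K} (hx : Feasible x) : 5 / 2 ≤ 3 * x 0 + x 1 := by
  obtain ⟨h₁, h₂, h₃⟩ := hx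
  linarith

end Relaxation

theorem Feasible.one_le_fst {z : Fin 3 → ℤ} (hz : Feasible z) : 1 ≤ z 0 := by
  obtain ⟨h₁, h₂, h₃⟩ := hz
  omega

theorem Feasible.three_le {z : Fin 3 → ℤ} (hz : Feasible z) : 3 ≤ 3 * z 0 + z 1 := by
  have := hz.one_le_fst
  obtain ⟨h₁, h₂, -⟩ := hz
  omega

theorem Feasible.four_le_of_snd_eq_one {z : Fin 3 → ℤ} (hz : Feasible z) (h : z 1 = 1) :
    4 ≤ 3 * z 0 + z 1 := by
  have := hz.one_le_fst
  omega

theorem feasible_one_zero_one : Feasible (![1, 0, 1] : Fin 3 → ℤ) := by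
  norm_num [Feasible, Matrix.cons_val_two]

theorem feasible_one_one_one : Feasible (![1, 1, 1] : Fin 3 → ℤ) := by
  norm_num [Feasible, Matrix.cons_val_two]

theorem Feasible.snd_ne_one_of_isMin {z : Fin 3 → ℤ} (hz : Feasible z)
    (hmin : ∀ y : Fin 3 → ℤ, Feasible y → 3 * z 0 + z 1 ≤ 3 * y 0 + y 1) : z 1 ≠ 1 := by
  intro h
  have h₃ : 3 * z 0 + z 1 ≤ 3 := hmin _ feasible_one_zero_one
  have h₄ := hz.four_le_of_snd_eq_one h
  omega

/-- The ILO problem `min 3x₁ + x₂ s.t. x₁+x₂+x₃ ≥ 2, x₁-x₃ ≥ 0, -x₂ ≥ -1` (whose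
constraint matrix has a row with three nonzero entries, all equal to 1) is a
counterexample to persistency of the LO relaxation: `(1/2, 1, 1/2)` is an optimal
fractional solution (value `5/2`), the integer optimum is `3` (attained at `(1,0,1)`),
the minimum over integer feasible solutions with `x₂ = 1` is `4`, and no optimal
integer solution `z` has `z₂ = 1`. -/
theorem example_three_variable_row_not_persistent :
    -- (1/2, 1, 1/2) is feasible for the LO relaxation
    ((1 : ℝ)/2 + 1 + 1/2 ≥ 2 ∧ (1 : ℝ)/2 - 1/2 ≥ 0 ∧ -(1 : ℝ) ≥ -1) ∧
    -- and it is optimal, with objective value 5/2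
    (∀ x : Fin 3 → ℝ, (x 0 + x 1 + x 2 ≥ 2 ∧ x 0 - x 2 ≥ 0 ∧ -x 1 ≥ -1) →
      3 * x 0 + x 1 ≥ 5/2) ∧
    (3 * ((1 : ℝ)/2) + 1 = 5/2) ∧
    -- (1, 0, 1) is integer feasible with objective value 3, and this is optimal
    ((1 : ℤ) + 0 + 1 ≥ 2 ∧ (1 : ℤ) - 1 ≥ 0 ∧ -(0 : ℤ) ≥ -1) ∧
    (∀ z : Fin 3 → ℤ, (z 0 + z 1 + z 2 ≥ 2 ∧ z 0 - z 2 ≥ 0 ∧ -z 1 ≥ -1) →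
      3 * z 0 + z 1 ≥ 3) ∧
    (3 * (1 : ℤ) + 0 = 3) ∧
    -- the minimum over integer feasible solutions with x₂ = 1 is 4
    (∀ z : Fin 3 → ℤ, (z 0 + z 1 + z 2 ≥ 2 ∧ z 0 - z 2 ≥ 0 ∧ -z 1 ≥ -1) → z 1 = 1 →
      3 * z 0 + z 1 ≥ 4) ∧
    (∃ z : Fin 3 → ℤ, (z 0 + z 1 + z 2 ≥ 2 ∧ z 0 - z 2 ≥ 0 ∧ -z 1 ≥ -1) ∧ z 1 = 1 ∧
      3 * z 0 + z 1 = 4) ∧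
    -- hence no optimal integer solution has z₂ = 1
    (∀ z : Fin 3 → ℤ, (z 0 + z 1 + z 2 ≥ 2 ∧ z 0 - z 2 ≥ 0 ∧ -z 1 ≥ -1) →
      (∀ y : Fin 3 → ℤ, (y 0 + y 1 + y 2 ≥ 2 ∧ y 0 - y 2 ≥ 0 ∧ -y 1 ≥ -1) →
        3 * z 0 + z 1 ≤ 3 * y 0 + y 1) →
      z 1 ≠ 1) :=
  ⟨feasible_half_one_half, fun _ => Feasible.five_halves_le, by norm_num,
    feasible_one_zero_one, fun _ => Feasible.three_le, rfl,
    fun _ => Feasible.four_le_of_snd_eq_one, ⟨_, feasible_one_one_one, rfl, rfl⟩,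
    fun _ => Feasible.snd_ne_one_of_isMin⟩
end

section
/- Consider the ILO problem: minimize 3x₁ + x₂ subject to 2x₁ + x₂ ≥ 2, −x₂ ≥ −1, x ∈ ℤ². The point (1/2, 1) is an optimal fractional solution of its LO relaxation (with optimal value 5/2), the optimal value of the ILO problem is 3 (attained at (1,0)), and the unique integer feasible solution with x₂ = 1 that minimizes the objective has value 4 (namely x₁ = 1). In particular, no optimal integer solution z satisfies z₂ = 1, so the LO relaxation of this ILO problem (whose constraint matrix has an entry equal to 2) is not persistent. -/
/-- The ILO problem `min 3x₁ + x₂ s.t. 2x₁ + x₂ ≥ 2, -x₂ ≥ -1` (whose constraint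
matrix has an entry equal to 2) is a counterexample to persistency of the LO
relaxation: `(1/2, 1)` is an optimal fractional solution (value `5/2`), the integer
optimum is `3` (attained at `(1,0)`), among integer feasible solutions with `x₂ = 1`
the minimum objective value is `4`, attained uniquely at `x₁ = 1`, and no optimal
integer solution `z` has `z₂ = 1`. -/
theorem example_coefficient_two_not_persistent :
    -- (1/2, 1) is feasible for the LO relaxation
    (2 * ((1 : ℝ)/2) + 1 ≥ 2 ∧ -(1 : ℝ) ≥ -1) ∧
    -- and it is optimal, with objective value 5/2
    (∀ x : Fin 2 → ℝ, (2 * x 0 + x 1 ≥ 2 ∧ -x 1 ≥ -1) → 3 * x 0 + x 1 ≥ 5/2) ∧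
    (3 * ((1 : ℝ)/2) + 1 = 5/2) ∧
    -- (1, 0) is integer feasible with objective value 3, and this is optimal
    (2 * (1 : ℤ) + 0 ≥ 2 ∧ -(0 : ℤ) ≥ -1) ∧
    (∀ z : Fin 2 → ℤ, (2 * z 0 + z 1 ≥ 2 ∧ -z 1 ≥ -1) → 3 * z 0 + z 1 ≥ 3) ∧
    (3 * (1 : ℤ) + 0 = 3) ∧
    -- among integer feasible solutions with x₂ = 1 the minimum value is 4,
    -- attained uniquely at x₁ = 1
    (∀ z : Fin 2 → ℤ, (2 * z 0 + z 1 ≥ 2 ∧ -z 1 ≥ -1) → z 1 = 1 →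
      3 * z 0 + z 1 ≥ 4) ∧
    (2 * (1 : ℤ) + 1 ≥ 2 ∧ -(1 : ℤ) ≥ -1 ∧ 3 * (1 : ℤ) + 1 = 4) ∧
    (∀ z : Fin 2 → ℤ, (2 * z 0 + z 1 ≥ 2 ∧ -z 1 ≥ -1) → z 1 = 1 →
      3 * z 0 + z 1 = 4 → z 0 = 1) ∧
    -- hence no optimal integer solution has z₂ = 1
    (∀ z : Fin 2 → ℤ, (2 * z 0 + z 1 ≥ 2 ∧ -z 1 ≥ -1) →
      (∀ y : Fin 2 → ℤ, (2 * y 0 + y 1 ≥ 2 ∧ -y 1 ≥ -1) →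
        3 * z 0 + z 1 ≤ 3 * y 0 + y 1) →
      z 1 ≠ 1) := by
  refine ⟨⟨by norm_num, by norm_num⟩, ?_, by norm_num, ⟨by norm_num, by norm_num⟩,
    ?_, by norm_num, ?_, ⟨by norm_num, by norm_num, by norm_num⟩, ?_, ?_⟩
  · intro x ⟨h1, h2⟩; linarith
  · intro z ⟨h1, h2⟩; omega
  · intro z ⟨h1, h2⟩ h3; omega
  · intro z ⟨h1, h2⟩ h3 h4; omega
  · intro z ⟨h1, h2⟩ hopt h3
    have := hopt ![1, 0] (by norm_num)
    simp [Matrix.cons_val_zero, Matrix.cons_val_one] at this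
    omega
end

section
/- Consider a feasible ILO problem min{w^T x : Ax ≥ b, x ≥ 0, x ∈ ℤ^n} on a UTVPI system with w ∈ ℚ^n nonnegative, and suppose its LO relaxation has an optimal fractional solution x* (for the relaxation including the constraints x ≥ 0). Let I(x*) = { j : x*_j ∈ ℤ } and let ⌊x*⌋ denote the componentwise floor of x*. Then the optimal value of the ILO problem equals w^T ⌊x*⌋ plus the optimal value of the binary problem: minimize w^T u over u ∈ {0,1}^n with u_j = 0 for all j ∈ I(x*) and A(⌊x*⌋ + u) ≥ b. -/
open Matrix BigOperators

-- single-coordinate core lemma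
lemma core_single (c F C q : ℤ) (p : ℝ) (hFC : F ≤ C) (hCF : C ≤ F + 1)
    (hFp : (F:ℝ) ≤ p) (hpC : p ≤ (C:ℝ)) (hp : (c:ℝ) ≤ p) (hq : c ≤ q) :
    c ≤ max F (min q C) ∧ (q < max F (min q C) → (c:ℝ) < p) := by
  have h3 : c ≤ C := by exact_mod_cast hp.trans hpC
  constructor
  · omega
  · intro h
    have hF : c + 1 ≤ F := by omega
    have : (c:ℝ) + 1 ≤ (F:ℝ) := by exact_mod_cast hF
    linarith

-- two-coordinate core lemma
lemma core_pair (c Fj Cj qj Fk Ck qk : ℤ) (pj pk : ℝ)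
    (hFCj : Fj ≤ Cj) (hCFj : Cj ≤ Fj + 1) (hFCk : Fk ≤ Ck) (hCFk : Ck ≤ Fk + 1)
    (hFpj : (Fj:ℝ) ≤ pj) (hpCj : pj ≤ (Cj:ℝ)) (hpFj : pj < (Fj:ℝ) + 1) (hCpj : (Cj:ℝ) < pj + 1)
    (hFpk : (Fk:ℝ) ≤ pk) (hpCk : pk ≤ (Ck:ℝ)) (hpFk : pk < (Fk:ℝ) + 1) (hCpk : (Ck:ℝ) < pk + 1)
    (hp : (c:ℝ) ≤ pj + pk) (hq : c ≤ qj + qk) :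
    c ≤ max Fj (min qj Cj) + max Fk (min qk Ck) ∧
    (qj + qk < max Fj (min qj Cj) + max Fk (min qk Ck) → (c:ℝ) < pj + pk) := by
  have h1 : c ≤ Fj + Ck := by
    have h : (c:ℝ) < (Fj:ℝ) + (Ck:ℝ) + 1 := by linarith
    have h' : c < Fj + Ck + 1 := by exact_mod_cast h
    omega
  have h2 : c ≤ Cj + Fk := by
    have h : (c:ℝ) < (Cj:ℝ) + (Fk:ℝ) + 1 := by linarith
    have h' : c < Cj + Fk + 1 := by exact_mod_cast h
    omega
  have h3 : c ≤ Cj + Ck := by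
    have h : (c:ℝ) ≤ (Cj:ℝ) + (Ck:ℝ) := by linarith
    exact_mod_cast h
  constructor
  · omega
  · intro hlt
    have hcase : qj < Fj ∨ qk < Fk := by omega
    rcases hcase with h | h
    · have h5 : c + 1 ≤ Fj + Ck := by omega
      have h5' : (c:ℝ) + 1 ≤ (Fj:ℝ) + (Ck:ℝ) := by exact_mod_cast h5
      linarith
    · have h5 : c + 1 ≤ Cj + Fk := by omega
      have h5' : (c:ℝ) + 1 ≤ (Cj:ℝ) + (Fk:ℝ) := by exact_mod_cast h5
      linarith

lemma coord_facts (aj xj : ℝ) (haj : aj = -1 ∨ aj = 1) (zj : ℤ) :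
    ∃ F C q : ℤ, F ≤ C ∧ C ≤ F + 1 ∧
      (F : ℝ) ≤ aj * xj ∧ aj * xj ≤ (C : ℝ) ∧
      aj * xj < (F : ℝ) + 1 ∧ (C : ℝ) < aj * xj + 1 ∧
      (q : ℝ) = aj * (zj : ℝ) ∧
      aj * ((max ⌊xj⌋ (min zj ⌈xj⌉) : ℤ) : ℝ) = ((max F (min q C) : ℤ) : ℝ) := by
  have hfc : ⌊xj⌋ ≤ ⌈xj⌉ := Int.floor_le_ceil xj
  have hcf : ⌈xj⌉ ≤ ⌊xj⌋ + 1 := Int.ceil_le_floor_add_one xj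
  have hfl : (⌊xj⌋ : ℝ) ≤ xj := Int.floor_le xj
  have hlc : xj ≤ (⌈xj⌉ : ℝ) := Int.le_ceil xj
  have hfl1 : xj < (⌊xj⌋ : ℝ) + 1 := Int.lt_floor_add_one xj
  have hcl1 : (⌈xj⌉ : ℝ) < xj + 1 := Int.ceil_lt_add_one xj
  rcases haj with h | h <;> subst h
  · refine ⟨-⌈xj⌉, -⌊xj⌋, -zj, by omega, by omega, by push_cast; linarith,
      by push_cast; linarith, by push_cast; linarith, by push_cast; linarith,
      by push_cast; ring, ?_⟩
    have hint : max (-⌈xj⌉) (min (-zj) (-⌊xj⌋)) = -(max ⌊xj⌋ (min zj ⌈xj⌉)) := by omega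
    rw [hint]
    push_cast
    ring
  · exact ⟨⌊xj⌋, ⌈xj⌉, zj, hfc, hcf, by linarith, by linarith, by linarith, by linarith,
      by ring, by ring⟩

lemma row_lemma_s6 {n : ℕ} (a : Fin n → ℝ) (ha : ∀ j, a j = -1 ∨ a j = 0 ∨ a j = 1)
    (hcard : Set.ncard {j | a j ≠ 0} ≤ 2) (c : ℤ) (x : Fin n → ℝ) (z : Fin n → ℤ)
    (hx : (c:ℝ) ≤ ∑ j, a j * x j) (hz : (c:ℝ) ≤ ∑ j, a j * (z j : ℝ)) :
    (c:ℝ) ≤ ∑ j, a j * ((max ⌊x j⌋ (min (z j) ⌈x j⌉) : ℤ) : ℝ) ∧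
    ((∑ j, a j * (z j : ℝ)) < ∑ j, a j * ((max ⌊x j⌋ (min (z j) ⌈x j⌉) : ℤ) : ℝ) →
      (c:ℝ) < ∑ j, a j * x j) := by
  classical
  set nz : Finset (Fin n) := Finset.univ.filter (fun j => a j ≠ 0) with hnzdef
  have hsum : ∀ v : Fin n → ℝ, ∑ j, a j * v j = ∑ j ∈ nz, a j * v j := by
    intro v
    exact (Finset.sum_filter_of_ne (fun x _ h => left_ne_zero_of_mul h)).symm
  have hmem : ∀ j ∈ nz, a j = -1 ∨ a j = 1 := by
    intro j hj
    have : a j ≠ 0 := (Finset.mem_filter.mp hj).2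
    rcases ha j with h | h | h
    · exact Or.inl h
    · exact absurd h this
    · exact Or.inr h
  have hcard' : nz.card ≤ 2 := by
    have hset : {j | a j ≠ 0} = ↑nz := by ext j; simp [hnzdef]
    rw [hset, Set.ncard_coe_finset] at hcard
    exact hcard
  rw [hsum x] at hx
  rw [hsum (fun j => (z j : ℝ))] at hz
  rw [hsum (fun j => ((max ⌊x j⌋ (min (z j) ⌈x j⌉) : ℤ) : ℝ)),
      hsum (fun j => (z j : ℝ)), hsum x]
  rcases (by omega : nz.card = 0 ∨ nz.card = 1 ∨ nz.card = 2) with h0 | h1 | h2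
  · rw [Finset.card_eq_zero.mp h0] at hx hz ⊢
    simp only [Finset.sum_empty] at hx hz ⊢
    exact ⟨hz, fun h => absurd h (lt_irrefl _)⟩
  · obtain ⟨j, hj⟩ := Finset.card_eq_one.mp h1
    rw [hj] at hx hz ⊢
    simp only [Finset.sum_singleton] at hx hz ⊢
    obtain ⟨F, C, q, hFC, hCF, hFp, hpC, _, _, hqe, hte⟩ :=
      coord_facts (a j) (x j) (hmem j (hj ▸ Finset.mem_singleton_self j)) (z j)
    have hq : c ≤ q := by
      have : (c:ℝ) ≤ (q:ℝ) := by rw [hqe]; exact hz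
      exact_mod_cast this
    obtain ⟨hg1, hg2⟩ := core_single c F C q (a j * x j) hFC hCF hFp hpC hx hq
    constructor
    · rw [hte]; exact_mod_cast hg1
    · intro hlt
      apply hg2
      rw [hte] at hlt
      have : (q:ℝ) < ((max F (min q C) : ℤ) : ℝ) := by rw [hqe]; exact hlt
      exact_mod_cast this
  · obtain ⟨j, k, hjk, hnz2⟩ := Finset.card_eq_two.mp h2
    rw [hnz2] at hx hz ⊢
    simp only [Finset.sum_pair hjk] at hx hz ⊢
    have hjm : j ∈ nz := hnz2 ▸ Finset.mem_insert_self j {k}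
    have hkm : k ∈ nz := hnz2 ▸ Finset.mem_insert_of_mem (Finset.mem_singleton_self k)
    obtain ⟨Fj, Cj, qj, hFCj, hCFj, hFpj, hpCj, hpFj, hCpj, hqej, htej⟩ :=
      coord_facts (a j) (x j) (hmem j hjm) (z j)
    obtain ⟨Fk, Ck, qk, hFCk, hCFk, hFpk, hpCk, hpFk, hCpk, hqek, htek⟩ :=
      coord_facts (a k) (x k) (hmem k hkm) (z k)
    have hq : c ≤ qj + qk := by
      have : (c:ℝ) ≤ (qj:ℝ) + (qk:ℝ) := by rw [hqej, hqek]; exact hz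
      exact_mod_cast this
    obtain ⟨hg1, hg2⟩ := core_pair c Fj Cj qj Fk Ck qk (a j * x j) (a k * x k)
      hFCj hCFj hFCk hCFk hFpj hpCj hpFj hCpj hFpk hpCk hpFk hCpk hx hq
    constructor
    · rw [htej, htek]
      have : ((max Fj (min qj Cj) : ℤ) : ℝ) + ((max Fk (min qk Ck) : ℤ) : ℝ) ≥ (c:ℝ) := by
        exact_mod_cast hg1
      linarith
    · intro hlt
      apply hg2
      rw [htej, htek] at hlt
      have : (qj:ℝ) + (qk:ℝ) <
          ((max Fj (min qj Cj) : ℤ) : ℝ) + ((max Fk (min qk Ck) : ℤ) : ℝ) := by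
        rw [hqej, hqek]; exact hlt
      exact_mod_cast this

lemma mulVec_eq_sum {m n : ℕ} (A : Matrix (Fin m) (Fin n) ℝ) (v : Fin n → ℝ) (i : Fin m) :
    A.mulVec v i = ∑ j, A i j * v j := by
  simp [Matrix.mulVec, dotProduct]

lemma key_lemma {m n : ℕ} (A : Matrix (Fin m) (Fin n) ℝ) (hA : IsUTVPI A)
    (b : Fin m → ℤ) (w : Fin n → ℚ) (hw : ∀ j, 0 ≤ w j)
    (xstar : Fin n → ℝ) (hxnn : ∀ j, 0 ≤ xstar j)
    (hxfeas : ∀ i, (b i : ℝ) ≤ A.mulVec xstar i)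
    (hxopt : ∀ x : Fin n → ℝ, (∀ j, 0 ≤ x j) → (∀ i, (b i : ℝ) ≤ A.mulVec x i) →
      ∑ j, (w j : ℝ) * xstar j ≤ ∑ j, (w j : ℝ) * x j)
    (z : Fin n → ℤ) (hznn : ∀ j, 0 ≤ z j)
    (hzfeas : ∀ i, (b i : ℝ) ≤ A.mulVec (fun j => (z j : ℝ)) i) :
    ∃ u : Fin n → ℤ, (∀ j, u j = 0 ∨ u j = 1) ∧
      (∀ j, (∃ k : ℤ, xstar j = (k : ℝ)) → u j = 0) ∧
      (∀ i, (b i : ℝ) ≤ A.mulVec (fun j => ((⌊xstar j⌋ + u j : ℤ) : ℝ)) i) ∧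
      ∑ j, (w j : ℝ) * (u j : ℝ) ≤
        ∑ j, (w j : ℝ) * (z j : ℝ) - ∑ j, (w j : ℝ) * (⌊xstar j⌋ : ℝ) := by
  classical
  set zc : Fin n → ℤ := fun j => max ⌊xstar j⌋ (min (z j) ⌈xstar j⌉) with hzc
  -- row lemma applied to each row
  have hrow : ∀ i, (b i : ℝ) ≤ ∑ j, A i j * ((zc j : ℤ) : ℝ) ∧
      ((∑ j, A i j * (z j : ℝ)) < ∑ j, A i j * ((zc j : ℤ) : ℝ) →
        (b i : ℝ) < ∑ j, A i j * xstar j) := by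
    intro i
    have hx' : (b i : ℝ) ≤ ∑ j, A i j * xstar j := by
      rw [← mulVec_eq_sum]; exact hxfeas i
    have hz' : (b i : ℝ) ≤ ∑ j, A i j * (z j : ℝ) := by
      rw [← mulVec_eq_sum]; exact hzfeas i
    exact row_lemma_s6 (fun j => A i j) (hA.1 i) (hA.2 i) (b i) xstar z hx' hz'
  -- feasibility of zc
  have hzcfeas : ∀ i, (b i : ℝ) ≤ A.mulVec (fun j => ((zc j : ℤ) : ℝ)) i := by
    intro i; rw [mulVec_eq_sum]; exact (hrow i).1
  -- the direction vector
  set d : Fin n → ℝ := fun j => (z j : ℝ) - (zc j : ℝ) with hd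
  -- strict slack on rows that decrease
  have hslack : ∀ i, A.mulVec d i < 0 → (b i : ℝ) < A.mulVec xstar i := by
    intro i hi
    rw [mulVec_eq_sum]
    apply (hrow i).2
    have : A.mulVec d i = (∑ j, A i j * (z j : ℝ)) - ∑ j, A i j * ((zc j : ℤ) : ℝ) := by
      rw [mulVec_eq_sum, ← Finset.sum_sub_distrib]
      apply Finset.sum_congr rfl
      intro j _
      simp only [hd]; ring
    linarith [this ▸ hi]
  -- choose lambda
  set g : Fin m → ℝ := fun i =>
    if h : A.mulVec d i < 0 then (A.mulVec xstar i - b i) / (-(A.mulVec d i)) else 1 with hg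
  have hgpos : ∀ i, 0 < g i := by
    intro i
    simp only [hg]
    split
    · next h =>
      apply div_pos
      · linarith [hslack i h]
      · linarith
    · norm_num
  set F : Finset ℝ := insert 1 (Finset.univ.image g) with hF
  have hFne : F.Nonempty := ⟨1, Finset.mem_insert_self 1 _⟩
  set lam : ℝ := F.min' hFne with hlam
  have hlampos : 0 < lam := by
    have hmem := F.min'_mem hFne
    rcases Finset.mem_insert.mp hmem with h | h
    · rw [hlam, h]; norm_num
    · obtain ⟨i, _, hi⟩ := Finset.mem_image.mp h
      rw [hlam, ← hi]; exact hgpos i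
  have hlam1 : lam ≤ 1 := F.min'_le 1 (Finset.mem_insert_self 1 _)
  have hlamg : ∀ i, lam ≤ g i := fun i =>
    F.min'_le (g i) (Finset.mem_insert_of_mem (Finset.mem_image_of_mem g (Finset.mem_univ i)))
  -- the perturbed point
  set x2 : Fin n → ℝ := fun j => xstar j + lam * d j with hx2
  have hx2eq : x2 = xstar + lam • d := by
    funext j; simp [hx2, smul_eq_mul]
  have hx2feas : ∀ i, (b i : ℝ) ≤ A.mulVec x2 i := by
    intro i
    have hlin : A.mulVec x2 i = A.mulVec xstar i + lam * A.mulVec d i := by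
      rw [hx2eq, Matrix.mulVec_add, Matrix.mulVec_smul]
      simp [smul_eq_mul]
    rw [hlin]
    rcases lt_or_ge (A.mulVec d i) 0 with h | h
    · have hgi : g i = (A.mulVec xstar i - b i) / (-(A.mulVec d i)) := by
        simp only [hg]; rw [dif_pos h]
      have h1 : lam ≤ (A.mulVec xstar i - b i) / (-(A.mulVec d i)) := hgi ▸ hlamg i
      have h2 : lam * (-(A.mulVec d i)) ≤ A.mulVec xstar i - b i := by
        rw [← le_div_iff₀ (by linarith : (0:ℝ) < -(A.mulVec d i))]
        exact h1
      linarith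
    · have := hxfeas i
      nlinarith
  have hx2nn : ∀ j, 0 ≤ x2 j := by
    intro j
    rcases le_or_gt (zc j) (z j) with h | h
    · have hdj : 0 ≤ d j := by
        simp only [hd]
        have : (zc j : ℝ) ≤ (z j : ℝ) := by exact_mod_cast h
        linarith
      have := hxnn j
      simp only [hx2]
      nlinarith
    · -- z j < zc j forces zc j = ⌊xstar j⌋
      have hfloor : zc j = ⌊xstar j⌋ := by
        simp only [hzc] at h ⊢
        omega
      have h1 : (zc j : ℝ) ≤ xstar j := by
        rw [hfloor]; exact Int.floor_le (xstar j)
      have h2 : (0:ℝ) ≤ (z j : ℝ) := by exact_mod_cast hznn j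
      have h3 : d j ≥ -(xstar j) := by
        simp only [hd]; linarith
      have h4 := hxnn j
      simp only [hx2]
      nlinarith
  -- optimality gives the cost comparison
  have hopt := hxopt x2 hx2nn hx2feas
  have hsplit : ∑ j, (w j : ℝ) * x2 j =
      ∑ j, (w j : ℝ) * xstar j + lam * ∑ j, (w j : ℝ) * d j := by
    rw [Finset.mul_sum, ← Finset.sum_add_distrib]
    apply Finset.sum_congr rfl
    intro j _
    simp only [hx2]; ring
  have hdsum : 0 ≤ ∑ j, (w j : ℝ) * d j := by
    by_contra hcon
    push_neg at hcon
    nlinarith [hsplit ▸ hopt]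
  have hcost : ∑ j, (w j : ℝ) * (zc j : ℝ) ≤ ∑ j, (w j : ℝ) * (z j : ℝ) := by
    have : ∑ j, (w j : ℝ) * d j =
        ∑ j, (w j : ℝ) * (z j : ℝ) - ∑ j, (w j : ℝ) * (zc j : ℝ) := by
      rw [← Finset.sum_sub_distrib]
      apply Finset.sum_congr rfl
      intro j _
      simp only [hd]; ring
    linarith [this ▸ hdsum]
  -- construct u
  refine ⟨fun j => zc j - ⌊xstar j⌋, ?_, ?_, ?_, ?_⟩
  · intro j
    show zc j - ⌊xstar j⌋ = 0 ∨ zc j - ⌊xstar j⌋ = 1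
    have h1 : ⌊xstar j⌋ ≤ zc j := le_max_left _ _
    have h2 : zc j ≤ ⌈xstar j⌉ := by
      simp only [hzc]
      have := Int.floor_le_ceil (xstar j)
      omega
    have := Int.ceil_le_floor_add_one (xstar j)
    omega
  · intro j ⟨k, hk⟩
    show zc j - ⌊xstar j⌋ = 0
    have h1 : ⌊xstar j⌋ = k := by rw [hk]; exact Int.floor_intCast k
    have h2 : ⌈xstar j⌉ = k := by rw [hk]; exact Int.ceil_intCast k
    simp only [hzc]
    omega
  · intro i
    have : (fun j => ((⌊xstar j⌋ + (zc j - ⌊xstar j⌋) : ℤ) : ℝ)) = fun j => ((zc j : ℤ) : ℝ) := by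
      funext j; norm_num
    rw [this]
    exact hzcfeas i
  · have hcast : ∀ j, ((zc j - ⌊xstar j⌋ : ℤ) : ℝ) = (zc j : ℝ) - (⌊xstar j⌋ : ℝ) := by
      intro j; push_cast; ring
    have : ∑ j, (w j : ℝ) * ((zc j - ⌊xstar j⌋ : ℤ) : ℝ) =
        ∑ j, (w j : ℝ) * (zc j : ℝ) - ∑ j, (w j : ℝ) * (⌊xstar j⌋ : ℝ) := by
      rw [← Finset.sum_sub_distrib]
      apply Finset.sum_congr rfl
      intro j _
      rw [hcast j]; ring
    rw [this]
    linarith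

/-- Reduction of ILO on UTVPI systems with nonnegative objective and nonnegative
variables to a binary problem: the optimal value of the ILO problem equals
`wᵀ⌊x*⌋` plus the optimal value of the binary problem obtained from an optimal
fractional solution `x*` of the LO relaxation. -/
theorem ILO_value_eq_floor_plus_binary_value
    {m n : ℕ} (A : Matrix (Fin m) (Fin n) ℝ) (hA : IsUTVPI A)
    (b : Fin m → ℤ) (w : Fin n → ℚ) (hw : ∀ j, 0 ≤ w j)
    (hfeas : ∃ z : Fin n → ℤ, (∀ j, 0 ≤ z j) ∧
      ∀ i, (b i : ℝ) ≤ A.mulVec (fun j => (z j : ℝ)) i)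
    (xstar : Fin n → ℝ)
    (hxnn : ∀ j, 0 ≤ xstar j)
    (hxfeas : ∀ i, (b i : ℝ) ≤ A.mulVec xstar i)
    (hxopt : ∀ x : Fin n → ℝ, (∀ j, 0 ≤ x j) → (∀ i, (b i : ℝ) ≤ A.mulVec x i) →
      ∑ j, (w j : ℝ) * xstar j ≤ ∑ j, (w j : ℝ) * x j) :
    sInf {r : ℝ | ∃ z : Fin n → ℤ, (∀ j, 0 ≤ z j) ∧
        (∀ i, (b i : ℝ) ≤ A.mulVec (fun j => (z j : ℝ)) i) ∧
        r = ∑ j, (w j : ℝ) * (z j : ℝ)} =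
      (∑ j, (w j : ℝ) * (⌊xstar j⌋ : ℝ)) +
      sInf {r : ℝ | ∃ u : Fin n → ℤ, (∀ j, u j = 0 ∨ u j = 1) ∧
        (∀ j, (∃ k : ℤ, xstar j = (k : ℝ)) → u j = 0) ∧
        (∀ i, (b i : ℝ) ≤ A.mulVec (fun j => ((⌊xstar j⌋ + u j : ℤ) : ℝ)) i) ∧
        r = ∑ j, (w j : ℝ) * (u j : ℝ)} := by
  classical
  set W : ℝ := ∑ j, (w j : ℝ) * (⌊xstar j⌋ : ℝ) with hW
  set S : Set ℝ := {r : ℝ | ∃ z : Fin n → ℤ, (∀ j, 0 ≤ z j) ∧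
      (∀ i, (b i : ℝ) ≤ A.mulVec (fun j => (z j : ℝ)) i) ∧
      r = ∑ j, (w j : ℝ) * (z j : ℝ)} with hS
  set T : Set ℝ := {r : ℝ | ∃ u : Fin n → ℤ, (∀ j, u j = 0 ∨ u j = 1) ∧
      (∀ j, (∃ k : ℤ, xstar j = (k : ℝ)) → u j = 0) ∧
      (∀ i, (b i : ℝ) ≤ A.mulVec (fun j => ((⌊xstar j⌋ + u j : ℤ) : ℝ)) i) ∧
      r = ∑ j, (w j : ℝ) * (u j : ℝ)} with hT
  have hwR : ∀ j, (0:ℝ) ≤ (w j : ℝ) := fun j => by exact_mod_cast hw j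
  -- membership transfer T → S
  have hTS : ∀ r ∈ T, W + r ∈ S := by
    rintro r ⟨u, hbin, _, hufeas, rfl⟩
    refine ⟨fun j => ⌊xstar j⌋ + u j, ?_, hufeas, ?_⟩
    · intro j
      show (0:ℤ) ≤ ⌊xstar j⌋ + u j
      have h1 : (0:ℤ) ≤ ⌊xstar j⌋ := Int.floor_nonneg.mpr (hxnn j)
      rcases hbin j with h | h <;> omega
    · rw [hW, ← Finset.sum_add_distrib]
      apply Finset.sum_congr rfl
      intro j _
      push_cast
      ring
  -- from S, key lemma gives T element
  have hST : ∀ r ∈ S, ∃ t ∈ T, W + t ≤ r := by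
    rintro r ⟨z, hznn, hzfeas, rfl⟩
    obtain ⟨u, hbin, hint, hufeas, hval⟩ :=
      key_lemma A hA b w hw xstar hxnn hxfeas hxopt z hznn hzfeas
    refine ⟨∑ j, (w j : ℝ) * (u j : ℝ), ⟨u, hbin, hint, hufeas, rfl⟩, by rw [hW]; linarith⟩
  have hSne : S.Nonempty := by
    obtain ⟨z, h1, h2⟩ := hfeas
    exact ⟨_, z, h1, h2, rfl⟩
  have hTne : T.Nonempty := by
    obtain ⟨s, hs⟩ := hSne
    obtain ⟨t, ht, _⟩ := hST s hs
    exact ⟨t, ht⟩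
  have hS0 : ∀ r ∈ S, (0:ℝ) ≤ r := by
    rintro r ⟨z, hznn, _, rfl⟩
    apply Finset.sum_nonneg
    intro j _
    exact mul_nonneg (hwR j) (by exact_mod_cast hznn j)
  have hT0 : ∀ r ∈ T, (0:ℝ) ≤ r := by
    rintro r ⟨u, hbin, _, _, rfl⟩
    apply Finset.sum_nonneg
    intro j _
    refine mul_nonneg (hwR j) ?_
    rcases hbin j with h | h <;> rw [h] <;> norm_num
  have hSbdd : BddBelow S := ⟨0, fun r hr => hS0 r hr⟩
  have hTbdd : BddBelow T := ⟨0, fun r hr => hT0 r hr⟩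
  apply le_antisymm
  · have h1 : sInf S - W ≤ sInf T := by
      apply le_csInf hTne
      intro t ht
      have := csInf_le hSbdd (hTS t ht)
      linarith
    linarith
  · apply le_csInf hSne
    intro s hs
    obtain ⟨t, htT, hle⟩ := hST s hs
    have := csInf_le hTbdd htT
    linarith
end

section
/- Consider a feasible ILO problem min{w^T x : Ax ≥ b, x ≥ 0, x ∈ ℤ^n} on a UTVPI system with w ∈ ℚ^n nonnegative, with optimal integer value OPT₁, and let x* be an optimal fractional solution of its LO relaxation (including the constraints x ≥ 0). Let I(x*) = { j : x*_j ∈ ℤ }, let OPT₂ be the optimal value of the binary problem min{ w^T u : u ∈ {0,1}^n, u_j = 0 for j ∈ I(x*), A(⌊x*⌋ + u) ≥ b }, and let u be any feasible solution of this binary problem with w^T u ≤ 2·OPT₂. Then the vector x = ⌊x*⌋ + u is a feasible solution of the original ILO problem (integer, nonnegative, satisfying Ax ≥ b) and satisfies w^T x ≤ 2·OPT₁. -/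
open Matrix BigOperators

section RowLemmas
open Finset


lemma row_int_sum {ι : Type*} [Fintype ι] (a : ι → ℝ)
    (ha : ∀ j, a j = -1 ∨ a j = 0 ∨ a j = 1) (v : ι → ℤ) :
    ∃ B : ℤ, (B : ℝ) = ∑ j, a j * (v j : ℝ) := by
  classical
  refine ⟨∑ j, (if a j = 1 then 1 else if a j = -1 then -1 else 0) * v j, ?_⟩
  push_cast
  refine Finset.sum_congr rfl fun j _ => ?_
  rcases ha j with h | h | h <;> rw [h] <;> norm_num

lemma row_feas {ι : Type*} [Fintype ι] (a : ι → ℝ)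
    (ha : ∀ j, a j = -1 ∨ a j = 0 ∨ a j = 1)
    (hcard : (Finset.univ.filter fun j => a j ≠ 0).card ≤ 2)
    (x : ι → ℝ) (z v : ι → ℤ) (b : ℤ)
    (hx : (b : ℝ) ≤ ∑ j, a j * x j)
    (hz : (b : ℝ) ≤ ∑ j, a j * (z j : ℝ))
    (hlo : ∀ j, min ((z j : ℝ)) (x j) ≤ (v j : ℝ))
    (hhi : ∀ j, (v j : ℝ) ≤ max ((z j : ℝ)) (x j))
    (hcl : ∀ j, |(v j : ℝ) - x j| < 1) :
    (b : ℝ) ≤ ∑ j, a j * (v j : ℝ) := by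
  classical
  set Bad : Finset ι := Finset.univ.filter (fun j => a j * (v j : ℝ) < a j * x j) with hBaddef
  have hmemBad : ∀ j, j ∈ Bad ↔ a j * (v j : ℝ) < a j * x j := by
    intro j; simp [hBaddef]
  have hminj : ∀ j, min (a j * (z j : ℝ)) (a j * x j) ≤ a j * (v j : ℝ) := by
    intro j
    rcases ha j with h | h | h
    · rw [h]; simp only [neg_one_mul]; rw [min_neg_neg]
      exact neg_le_neg (hhi j)
    · simp [h]
    · rw [h]; simpa using hlo j
  have hBadz : ∀ j ∈ Bad, a j * (z j : ℝ) ≤ a j * (v j : ℝ) := by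
    intro j hj
    have hlt := (hmemBad j).1 hj
    rcases le_total (a j * (z j : ℝ)) (a j * x j) with h' | h'
    · have := hminj j; rwa [min_eq_left h'] at this
    · have := hminj j; rw [min_eq_right h'] at this; linarith
  have hBadne : ∀ j ∈ Bad, a j ≠ 0 := by
    intro j hj h0
    have := (hmemBad j).1 hj
    rw [h0] at this; simp at this
  by_cases hB : Bad = ∅
  · refine le_trans hx (Finset.sum_le_sum fun j _ => ?_)
    by_contra hlt
    have : j ∈ Bad := (hmemBad j).2 (lt_of_not_ge hlt)
    simp [hB] at this
  · by_cases hsub : ∀ j, a j ≠ 0 → j ∈ Bad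
    · refine le_trans hz (Finset.sum_le_sum fun j _ => ?_)
      by_cases h0 : a j = 0
      · simp [h0]
      · exact hBadz j (hsub j h0)
    · push_neg at hsub
      obtain ⟨k, hk0, hkB⟩ := hsub
      -- Bad has exactly one element
      have hBsub : Bad ⊆ (Finset.univ.filter fun j => a j ≠ 0).erase k := by
        intro j hj
        refine Finset.mem_erase.2 ⟨?_, by simp [hBadne j hj]⟩
        rintro rfl; exact hkB hj
      have hcard1 : Bad.card ≤ 1 := by
        have hksupp : k ∈ Finset.univ.filter (fun j => a j ≠ 0) := by simp [hk0]
        have h1 := Finset.card_le_card hBsub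
        rw [Finset.card_erase_of_mem hksupp] at h1
        omega
      have hne : Bad.Nonempty := Finset.nonempty_of_ne_empty hB
      have hpos : 0 < Bad.card := Finset.card_pos.2 hne
      have hc1 : Bad.card = 1 := by omega
      obtain ⟨j₀, hj₀⟩ := Finset.card_eq_one.1 hc1
      -- sum bound
      have hsumBad : ∑ j ∈ Bad, (a j * (v j : ℝ) - a j * x j) ≤
          ∑ j, (a j * (v j : ℝ) - a j * x j) := by
        refine Finset.sum_le_sum_of_subset_of_nonneg (Finset.subset_univ _) ?_
        intro j _ hj
        have : ¬ (a j * (v j : ℝ) < a j * x j) := fun h => hj ((hmemBad j).2 h)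
        linarith [le_of_not_gt this]
      have hj0bad : -1 < a j₀ * (v j₀ : ℝ) - a j₀ * x j₀ := by
        have hane : a j₀ ≠ 0 := hBadne j₀ (by simp [hj₀])
        have habs : |a j₀| = 1 := by
          rcases ha j₀ with h | h | h <;> simp [h] at hane ⊢
        have : |a j₀ * (v j₀ : ℝ) - a j₀ * x j₀| < 1 := by
          rw [← mul_sub, abs_mul, habs, one_mul]; exact hcl j₀
        linarith [abs_lt.1 this]
      have hkey : ∑ j, a j * x j - 1 < ∑ j, a j * (v j : ℝ) := by
        have := hsumBad
        rw [hj₀, Finset.sum_singleton] at this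
        have hsplit : ∑ j, (a j * (v j : ℝ) - a j * x j) =
            (∑ j, a j * (v j : ℝ)) - ∑ j, a j * x j := by
          rw [Finset.sum_sub_distrib]
        linarith
      obtain ⟨B, hBe⟩ := row_int_sum a ha v
      have : (b : ℝ) - 1 < (B : ℝ) := by rw [hBe]; linarith
      have hbB : b ≤ B := by
        have h2 : (b : ℝ) < (B : ℝ) + 1 := by linarith
        have h3 : b < B + 1 := by exact_mod_cast h2
        omega
      rw [← hBe]; exact_mod_cast hbB

lemma row_tight {ι : Type*} [Fintype ι] (a : ι → ℝ)
    (ha : ∀ j, a j = -1 ∨ a j = 0 ∨ a j = 1)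
    (hcard : (Finset.univ.filter fun j => a j ≠ 0).card ≤ 2)
    (x : ι → ℝ) (z v : ι → ℤ) (b : ℤ)
    (htight : ∑ j, a j * x j = (b : ℝ))
    (hz : (b : ℝ) ≤ ∑ j, a j * (z j : ℝ))
    (hvb : (b : ℝ) ≤ ∑ j, a j * (v j : ℝ))
    (hlo : ∀ j, min ((z j : ℝ)) (x j) ≤ (v j : ℝ))
    (hhi : ∀ j, (v j : ℝ) ≤ max ((z j : ℝ)) (x j))
    (hcl : ∀ j, |(v j : ℝ) - x j| < 1) :
    ∑ j, a j * (v j : ℝ) ≤ ∑ j, a j * (z j : ℝ) := by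
  classical
  set Hi : Finset ι := Finset.univ.filter (fun j => a j * x j < a j * (v j : ℝ)) with hHidef
  have hmemHi : ∀ j, j ∈ Hi ↔ a j * x j < a j * (v j : ℝ) := by
    intro j; simp [hHidef]
  have hmaxj : ∀ j, a j * (v j : ℝ) ≤ max (a j * (z j : ℝ)) (a j * x j) := by
    intro j
    rcases ha j with h | h | h
    · rw [h]; simp only [neg_one_mul]; rw [max_neg_neg]
      exact neg_le_neg (hlo j)
    · simp [h]
    · rw [h]; simpa using hhi j
  have hHiz : ∀ j ∈ Hi, a j * (v j : ℝ) ≤ a j * (z j : ℝ) := by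
    intro j hj
    have hlt := (hmemHi j).1 hj
    rcases le_total (a j * x j) (a j * (z j : ℝ)) with h' | h'
    · have := hmaxj j; rwa [max_eq_left h'] at this
    · have := hmaxj j; rw [max_eq_right h'] at this; linarith
  have hHine : ∀ j ∈ Hi, a j ≠ 0 := by
    intro j hj h0
    have := (hmemHi j).1 hj
    rw [h0] at this; simp at this
  by_cases hB : Hi = ∅
  · refine le_trans (le_trans (Finset.sum_le_sum fun j _ => ?_) htight.le) hz
    by_contra hlt
    have : j ∈ Hi := (hmemHi j).2 (lt_of_not_ge hlt)
    simp [hB] at this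
  · by_cases hsub : ∀ j, a j ≠ 0 → j ∈ Hi
    · refine Finset.sum_le_sum fun j _ => ?_
      by_cases h0 : a j = 0
      · simp [h0]
      · exact hHiz j (hsub j h0)
    · push_neg at hsub
      obtain ⟨k, hk0, hkB⟩ := hsub
      have hBsub : Hi ⊆ (Finset.univ.filter fun j => a j ≠ 0).erase k := by
        intro j hj
        refine Finset.mem_erase.2 ⟨?_, by simp [hHine j hj]⟩
        rintro rfl; exact hkB hj
      have hcard1 : Hi.card ≤ 1 := by
        have hksupp : k ∈ Finset.univ.filter (fun j => a j ≠ 0) := by simp [hk0]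
        have h1 := Finset.card_le_card hBsub
        rw [Finset.card_erase_of_mem hksupp] at h1
        omega
      have hne : Hi.Nonempty := Finset.nonempty_of_ne_empty hB
      have hpos : 0 < Hi.card := Finset.card_pos.2 hne
      have hc1 : Hi.card = 1 := by omega
      obtain ⟨j₀, hj₀⟩ := Finset.card_eq_one.1 hc1
      have hsumHi : ∑ j ∈ Hi, (a j * x j - a j * (v j : ℝ)) ≤
          ∑ j, (a j * x j - a j * (v j : ℝ)) := by
        refine Finset.sum_le_sum_of_subset_of_nonneg (Finset.subset_univ _) ?_
        intro j _ hj
        have : ¬ (a j * x j < a j * (v j : ℝ)) := fun h => hj ((hmemHi j).2 h)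
        linarith [le_of_not_gt this]
      have hj0hi : a j₀ * (v j₀ : ℝ) - a j₀ * x j₀ < 1 := by
        have hane : a j₀ ≠ 0 := hHine j₀ (by simp [hj₀])
        have habs : |a j₀| = 1 := by
          rcases ha j₀ with h | h | h <;> simp [h] at hane ⊢
        have : |a j₀ * (v j₀ : ℝ) - a j₀ * x j₀| < 1 := by
          rw [← mul_sub, abs_mul, habs, one_mul]; exact hcl j₀
        linarith [abs_lt.1 this]
      have hkey : ∑ j, a j * (v j : ℝ) < ∑ j, a j * x j + 1 := by
        have := hsumHi
        rw [hj₀, Finset.sum_singleton] at this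
        have hsplit : ∑ j, (a j * x j - a j * (v j : ℝ)) =
            (∑ j, a j * x j) - ∑ j, a j * (v j : ℝ) := by
          rw [Finset.sum_sub_distrib]
        linarith
      obtain ⟨B, hBe⟩ := row_int_sum a ha v
      have h2 : (B : ℝ) < (b : ℝ) + 1 := by rw [hBe]; linarith [htight]
      have h3 : B < b + 1 := by exact_mod_cast h2
      have h4 : (B : ℝ) ≤ (b : ℝ) := by exact_mod_cast (by omega : B ≤ b)
      rw [← hBe]; linarith

end RowLemmas

set_option maxHeartbeats 1000000 in
/-- Two-approximability via the binary reduction: if `u` is a 2-approximate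
solution of the binary problem obtained from an optimal fractional solution
`x*`, then `⌊x*⌋ + u` is a feasible 2-approximate solution of the original ILO
problem on a UTVPI system (with nonnegative objective and variables). -/
theorem two_approximation_via_binary
    {m n : ℕ} (A : Matrix (Fin m) (Fin n) ℝ) (hA : IsUTVPI A)
    (b : Fin m → ℤ) (w : Fin n → ℚ) (hw : ∀ j, 0 ≤ w j)
    (hfeas : ∃ z : Fin n → ℤ, (∀ j, 0 ≤ z j) ∧
      ∀ i, (b i : ℝ) ≤ A.mulVec (fun j => (z j : ℝ)) i)
    (OPT1 : ℝ)
    (hOPT1 : IsLeast {r : ℝ | ∃ z : Fin n → ℤ, (∀ j, 0 ≤ z j) ∧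
      (∀ i, (b i : ℝ) ≤ A.mulVec (fun j => (z j : ℝ)) i) ∧
      r = ∑ j, (w j : ℝ) * (z j : ℝ)} OPT1)
    (xstar : Fin n → ℝ)
    (hxnn : ∀ j, 0 ≤ xstar j)
    (hxfeas : ∀ i, (b i : ℝ) ≤ A.mulVec xstar i)
    (hxopt : ∀ x : Fin n → ℝ, (∀ j, 0 ≤ x j) → (∀ i, (b i : ℝ) ≤ A.mulVec x i) →
      ∑ j, (w j : ℝ) * xstar j ≤ ∑ j, (w j : ℝ) * x j)
    (OPT2 : ℝ)
    (hOPT2 : IsLeast {r : ℝ | ∃ u : Fin n → ℤ, (∀ j, u j = 0 ∨ u j = 1) ∧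
      (∀ j, (∃ k : ℤ, xstar j = (k : ℝ)) → u j = 0) ∧
      (∀ i, (b i : ℝ) ≤ A.mulVec (fun j => ((⌊xstar j⌋ + u j : ℤ) : ℝ)) i) ∧
      r = ∑ j, (w j : ℝ) * (u j : ℝ)} OPT2)
    (u : Fin n → ℤ)
    (hu01 : ∀ j, u j = 0 ∨ u j = 1)
    (huI : ∀ j, (∃ k : ℤ, xstar j = (k : ℝ)) → u j = 0)
    (hufeas : ∀ i, (b i : ℝ) ≤ A.mulVec (fun j => ((⌊xstar j⌋ + u j : ℤ) : ℝ)) i)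
    (huapx : ∑ j, (w j : ℝ) * (u j : ℝ) ≤ 2 * OPT2) :
    (∀ j, 0 ≤ ⌊xstar j⌋ + u j) ∧
    (∀ i, (b i : ℝ) ≤ A.mulVec (fun j => ((⌊xstar j⌋ + u j : ℤ) : ℝ)) i) ∧
    (∑ j, (w j : ℝ) * ((⌊xstar j⌋ + u j : ℤ) : ℝ) ≤ 2 * OPT1) := by
  classical
  obtain ⟨hA1, hA2⟩ := hA
  have hmul : ∀ (f : Fin n → ℝ) (i : Fin m), A.mulVec f i = ∑ j, A i j * f j := by
    intro f i; simp [Matrix.mulVec, dotProduct]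
  have hcard : ∀ i, (Finset.univ.filter fun j => A i j ≠ 0).card ≤ 2 := by
    intro i
    have h := hA2 i
    have heq : {j | A i j ≠ 0} = ↑(Finset.univ.filter fun j => A i j ≠ 0) := by
      ext j; simp
    rwa [heq, Set.ncard_coe_finset] at h
  obtain ⟨z, hznn, hzfeas, hzval⟩ := hOPT1.1
  -- the clamped vector
  set v : Fin n → ℤ := fun j => max ⌊xstar j⌋ (min (z j) ⌈xstar j⌉) with hvdef
  have hvfl : ∀ j, ⌊xstar j⌋ ≤ v j := fun j => le_max_left _ _
  have hvcl : ∀ j, v j ≤ ⌈xstar j⌉ := fun j =>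
    max_le (Int.floor_le_ceil _) (min_le_right _ _)
  have hvlo : ∀ j, min ((z j : ℝ)) (xstar j) ≤ (v j : ℝ) := by
    intro j
    have h1 : min (z j) ⌈xstar j⌉ ≤ v j := le_max_right _ _
    have h2 : ((min (z j) ⌈xstar j⌉ : ℤ) : ℝ) ≤ (v j : ℝ) := by exact_mod_cast h1
    push_cast at h2
    exact le_trans (min_le_min (le_refl _) (Int.le_ceil _)) h2
  have hvhi : ∀ j, (v j : ℝ) ≤ max ((z j : ℝ)) (xstar j) := by
    intro j
    have h1 : (v j : ℝ) = max ((⌊xstar j⌋ : ℤ) : ℝ) (min ((z j : ℤ) : ℝ) ((⌈xstar j⌉ : ℤ) : ℝ)) := by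
      rw [hvdef]; push_cast; ring_nf
    rw [h1]
    apply max_le
    · exact le_trans (Int.floor_le _) (le_max_right _ _)
    · exact le_trans (min_le_left _ _) (le_max_left _ _)
  have hcl : ∀ j, |(v j : ℝ) - xstar j| < 1 := by
    intro j
    rw [abs_lt]
    constructor
    · have h1 : (⌊xstar j⌋ : ℝ) ≤ (v j : ℝ) := by exact_mod_cast hvfl j
      linarith [Int.sub_one_lt_floor (xstar j)]
    · have h1 : (v j : ℝ) ≤ (⌈xstar j⌉ : ℝ) := by exact_mod_cast hvcl j
      linarith [Int.ceil_lt_add_one (xstar j)]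
  have hvnn : ∀ j, 0 ≤ v j := fun j => le_trans (Int.floor_nonneg.2 (hxnn j)) (hvfl j)
  have hvfeas : ∀ i, (b i : ℝ) ≤ ∑ j, A i j * (v j : ℝ) := by
    intro i
    exact row_feas (fun j => A i j) (fun j => hA1 i j) (hcard i) xstar z v (b i)
      (by rw [← hmul]; exact hxfeas i) (by rw [← hmul]; exact hzfeas i) hvlo hvhi hcl
  -- u' = v - floor
  set u' : Fin n → ℤ := fun j => v j - ⌊xstar j⌋ with hu'def
  have hu'01 : ∀ j, u' j = 0 ∨ u' j = 1 := by
    intro j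
    have h1 := hvfl j
    have h2 := hvcl j
    have h3 := Int.ceil_le_floor_add_one (xstar j)
    show v j - ⌊xstar j⌋ = 0 ∨ v j - ⌊xstar j⌋ = 1
    omega
  have hu'I : ∀ j, (∃ k : ℤ, xstar j = (k : ℝ)) → u' j = 0 := by
    rintro j ⟨k, hk⟩
    have hfl : ⌊xstar j⌋ = k := by rw [hk]; exact Int.floor_intCast k
    have hce : ⌈xstar j⌉ = k := by rw [hk]; exact Int.ceil_intCast k
    have h1 := hvfl j
    have h2 := hvcl j
    show v j - ⌊xstar j⌋ = 0
    omega
  have hflv : ∀ j, ⌊xstar j⌋ + u' j = v j := by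
    intro j; show ⌊xstar j⌋ + (v j - ⌊xstar j⌋) = v j; ring
  have hmem2 : (∑ j, (w j : ℝ) * (u' j : ℝ)) ∈ {r : ℝ | ∃ u : Fin n → ℤ, (∀ j, u j = 0 ∨ u j = 1) ∧
      (∀ j, (∃ k : ℤ, xstar j = (k : ℝ)) → u j = 0) ∧
      (∀ i, (b i : ℝ) ≤ A.mulVec (fun j => ((⌊xstar j⌋ + u j : ℤ) : ℝ)) i) ∧
      r = ∑ j, (w j : ℝ) * (u j : ℝ)} := by
    refine ⟨u', hu'01, hu'I, ?_, rfl⟩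
    intro i
    have he : (fun j => ((⌊xstar j⌋ + u' j : ℤ) : ℝ)) = fun j => ((v j : ℤ) : ℝ) := by
      funext j; rw [hflv j]
    rw [he, hmul]
    exact hvfeas i
  have hOPT2le : OPT2 ≤ ∑ j, (w j : ℝ) * (u' j : ℝ) := hOPT2.2 hmem2
  -- epsilon argument: sum w v ≤ sum w z
  set d : Fin n → ℝ := fun j => (z j : ℝ) - (v j : ℝ) with hddef
  set sA : Fin m → ℝ := fun i => ∑ j, A i j * d j with hsAdef
  have hsA : ∀ i, sA i = (∑ j, A i j * (z j : ℝ)) - ∑ j, A i j * (v j : ℝ) := by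
    intro i
    rw [hsAdef]
    simp only [hddef]
    rw [← Finset.sum_sub_distrib]
    exact Finset.sum_congr rfl fun j _ => by ring
  have htightd : ∀ i, (∑ j, A i j * xstar j = (b i : ℝ)) → 0 ≤ sA i := by
    intro i ht
    rw [hsA i]
    have := row_tight (fun j => A i j) (fun j => hA1 i j) (hcard i) xstar z v (b i)
      ht (by rw [← hmul]; exact hzfeas i) (hvfeas i) hvlo hvhi hcl
    linarith
  have hd0 : ∀ j, xstar j = 0 → 0 ≤ d j := by
    intro j hx0
    have hce : ⌈xstar j⌉ = 0 := by rw [hx0]; exact Int.ceil_zero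
    have h1 : v j ≤ 0 := le_trans (hvcl j) (le_of_eq hce)
    have h2 : v j ≤ z j := le_trans h1 (hznn j)
    rw [hddef]
    simp only [sub_nonneg]
    exact_mod_cast h2
  set F : Finset ℝ := insert 1
      ((Finset.univ.image fun i : Fin m =>
        if 0 < (∑ j, A i j * xstar j) - b i then ((∑ j, A i j * xstar j) - b i) / (1 + |sA i|) else 1) ∪
       (Finset.univ.image fun j : Fin n =>
        if 0 < xstar j then xstar j / (1 + |d j|) else 1)) with hFdef
  have hFne : F.Nonempty := ⟨1, Finset.mem_insert_self _ _⟩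
  set ε : ℝ := F.min' hFne with hedef
  have hεpos : 0 < ε := by
    rw [hedef]
    rw [Finset.lt_min'_iff]
    intro r hr
    rw [hFdef] at hr
    simp only [Finset.mem_insert, Finset.mem_union, Finset.mem_image, Finset.mem_univ,
      true_and] at hr
    rcases hr with rfl | ⟨i, rfl⟩ | ⟨j, rfl⟩
    · norm_num
    · split
      · next h => exact div_pos h (by positivity)
      · norm_num
    · split
      · next h => exact div_pos h (by positivity)
      · norm_num
  have hεle : ∀ r ∈ F, ε ≤ r := fun r hr => Finset.min'_le F r hr
  set y : Fin n → ℝ := fun j => xstar j + ε * d j with hydef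
  have hynn : ∀ j, 0 ≤ y j := by
    intro j
    show 0 ≤ xstar j + ε * d j
    rcases le_or_gt 0 (d j) with h | h
    · exact add_nonneg (hxnn j) (mul_nonneg hεpos.le h)
    · have hx0 : 0 < xstar j := by
        rcases (hxnn j).lt_or_eq with h' | h'
        · exact h'
        · exact absurd (hd0 j h'.symm) (not_le.2 h)
      have hmemF : xstar j / (1 + |d j|) ∈ F := by
        rw [hFdef]
        refine Finset.mem_insert_of_mem (Finset.mem_union_right _ ?_)
        refine Finset.mem_image.2 ⟨j, Finset.mem_univ _, ?_⟩
        rw [if_pos hx0]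
      have hεr : ε ≤ xstar j / (1 + |d j|) := hεle _ hmemF
      have hpos1 : (0:ℝ) < 1 + |d j| := by positivity
      have h2 : ε * (1 + |d j|) ≤ xstar j := (le_div_iff₀ hpos1).1 hεr
      have h4 : ε * |d j| ≤ xstar j := by nlinarith [hεpos.le, abs_nonneg (d j)]
      rw [abs_of_neg h, mul_neg] at h4
      linarith
  have hyfeas : ∀ i, (b i : ℝ) ≤ A.mulVec y i := by
    intro i
    have hexp : A.mulVec y i = (∑ j, A i j * xstar j) + ε * sA i := by
      rw [hmul, hsAdef]
      simp only [hydef]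
      rw [Finset.mul_sum, ← Finset.sum_add_distrib]
      exact Finset.sum_congr rfl fun j _ => by ring
    rw [hexp]
    have hxf : (b i : ℝ) ≤ ∑ j, A i j * xstar j := by rw [← hmul]; exact hxfeas i
    rcases le_or_gt 0 (sA i) with h | h
    · nlinarith [mul_nonneg hεpos.le h]
    · have hslack : 0 < (∑ j, A i j * xstar j) - b i := by
        rcases hxf.lt_or_eq with h' | h'
        · linarith
        · exact absurd (htightd i h'.symm) (not_le.2 h)
      have hmemF : ((∑ j, A i j * xstar j) - b i) / (1 + |sA i|) ∈ F := by
        rw [hFdef]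
        refine Finset.mem_insert_of_mem (Finset.mem_union_left _ ?_)
        refine Finset.mem_image.2 ⟨i, Finset.mem_univ _, ?_⟩
        rw [if_pos hslack]
      have hεr : ε ≤ ((∑ j, A i j * xstar j) - b i) / (1 + |sA i|) := hεle _ hmemF
      have hpos1 : (0:ℝ) < 1 + |sA i| := by positivity
      have h2 : ε * (1 + |sA i|) ≤ (∑ j, A i j * xstar j) - b i := (le_div_iff₀ hpos1).1 hεr
      have h4 : ε * |sA i| ≤ (∑ j, A i j * xstar j) - b i := by
        nlinarith [hεpos.le, abs_nonneg (sA i)]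
      rw [abs_of_neg h, mul_neg] at h4
      linarith
  have hyle := hxopt y hynn hyfeas
  have hexp2 : ∑ j, (w j : ℝ) * y j = (∑ j, (w j : ℝ) * xstar j) + ε * ∑ j, (w j : ℝ) * d j := by
    simp only [hydef]
    rw [Finset.mul_sum, ← Finset.sum_add_distrib]
    exact Finset.sum_congr rfl fun j _ => by ring
  have hwd : 0 ≤ ∑ j, (w j : ℝ) * d j := by
    by_contra hneg
    push_neg at hneg
    have := mul_neg_of_pos_of_neg hεpos hneg
    rw [hexp2] at hyle
    linarith
  have hwvz : ∑ j, (w j : ℝ) * (v j : ℝ) ≤ ∑ j, (w j : ℝ) * (z j : ℝ) := by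
    have hsplit : ∑ j, (w j : ℝ) * d j =
        (∑ j, (w j : ℝ) * (z j : ℝ)) - ∑ j, (w j : ℝ) * (v j : ℝ) := by
      simp only [hddef]
      rw [← Finset.sum_sub_distrib]
      exact Finset.sum_congr rfl fun j _ => by ring
    rw [hsplit] at hwd
    linarith
  -- final arithmetic
  refine ⟨?_, hufeas, ?_⟩
  · intro j
    have h1 : 0 ≤ ⌊xstar j⌋ := Int.floor_nonneg.2 (hxnn j)
    rcases hu01 j with h | h <;> omega
  · have hwnn : ∀ j, (0:ℝ) ≤ (w j : ℝ) := fun j => by exact_mod_cast hw j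
    have hfl0 : 0 ≤ ∑ j, (w j : ℝ) * (⌊xstar j⌋ : ℝ) :=
      Finset.sum_nonneg fun j _ => mul_nonneg (hwnn j)
        (by exact_mod_cast Int.floor_nonneg.2 (hxnn j))
    have hsplitgoal : ∑ j, (w j : ℝ) * ((⌊xstar j⌋ + u j : ℤ) : ℝ) =
        (∑ j, (w j : ℝ) * (⌊xstar j⌋ : ℝ)) + ∑ j, (w j : ℝ) * (u j : ℝ) := by
      rw [← Finset.sum_add_distrib]
      refine Finset.sum_congr rfl fun j _ => ?_
      push_cast
      ring
    have hsplitu' : ∑ j, (w j : ℝ) * (u' j : ℝ) =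
        (∑ j, (w j : ℝ) * (v j : ℝ)) - ∑ j, (w j : ℝ) * (⌊xstar j⌋ : ℝ) := by
      rw [← Finset.sum_sub_distrib]
      refine Finset.sum_congr rfl fun j _ => ?_
      rw [hu'def]
      push_cast
      ring
    have hwxz : ∑ j, (w j : ℝ) * xstar j ≤ ∑ j, (w j : ℝ) * (z j : ℝ) := by
      exact hxopt (fun j => (z j : ℝ)) (fun j => by show (0:ℝ) ≤ (z j : ℝ); exact_mod_cast hznn j) hzfeas
    rw [hsplitgoal]
    have hOPT1z : OPT1 = ∑ j, (w j : ℝ) * (z j : ℝ) := hzval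
    linarith [huapx, hOPT2le, hsplitu', hwvz, hfl0]
end

section
/- Suppose the ILO problem min{w^T x : Ax ≥ b, x ∈ ℤ^n} on a UTVPI system is feasible, and let x* be an optimal fractional solution of its LO relaxation such that x* is half-integral (every coordinate lies in (1/2)ℤ). Then there exists an optimal integer solution z of the ILO problem in the 1/2-neighborhood of x*, i.e., z ∈ ℤ^n with |z_j − x*_j| ≤ 1/2 for all j = 1,…,n. -/
open Matrix BigOperators

/-- Half-integral persistency: if the ILO problem on a UTVPI system is feasible
and `xstar` is a half-integral optimal fractional solution of the LO relaxation,
then there exists an optimal integer solution in the 1/2-neighborhood of `xstar`. -/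
theorem half_integral_neighborhood_persistency
    {m n : ℕ} (A : Matrix (Fin m) (Fin n) ℝ) (hA : IsUTVPI A)
    (b : Fin m → ℤ) (w : Fin n → ℚ)
    (hfeas : ∃ z : Fin n → ℤ, ∀ i, (b i : ℝ) ≤ A.mulVec (fun j => (z j : ℝ)) i)
    (xstar : Fin n → ℝ)
    (hhalf : ∀ j, ∃ k : ℤ, xstar j = (k : ℝ) / 2)
    (hxfeas : ∀ i, (b i : ℝ) ≤ A.mulVec xstar i)
    (hxopt : ∀ x : Fin n → ℝ, (∀ i, (b i : ℝ) ≤ A.mulVec x i) →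
      ∑ j, (w j : ℝ) * xstar j ≤ ∑ j, (w j : ℝ) * x j) :
    ∃ z : Fin n → ℤ,
      (∀ i, (b i : ℝ) ≤ A.mulVec (fun j => (z j : ℝ)) i) ∧
      (∀ z' : Fin n → ℤ, (∀ i, (b i : ℝ) ≤ A.mulVec (fun j => (z' j : ℝ)) i) →
        ∑ j, (w j : ℝ) * (z j : ℝ) ≤ ∑ j, (w j : ℝ) * (z' j : ℝ)) ∧
      (∀ j, |(z j : ℝ) - xstar j| ≤ 1/2) := by
  classical
  obtain ⟨hA1, hA2⟩ := hA
  choose K hK using hhalf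
  -- Structure of each row: zero, one, or two nonzero ±1 entries
  have hstruct : ∀ i : Fin m,
      (∀ v : Fin n → ℝ, A.mulVec v i = 0) ∨
      (∃ (a : Fin n) (ε : ℤ), (ε = 1 ∨ ε = -1) ∧
        ∀ v : Fin n → ℝ, A.mulVec v i = (ε : ℝ) * v a) ∨
      (∃ (a c : Fin n) (ε η : ℤ), a ≠ c ∧ (ε = 1 ∨ ε = -1) ∧ (η = 1 ∨ η = -1) ∧
        ∀ v : Fin n → ℝ, A.mulVec v i = (ε : ℝ) * v a + (η : ℝ) * v c) := by
    intro i
    have hmv : ∀ v : Fin n → ℝ, A.mulVec v i = ∑ j, A i j * v j := by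
      intro v; simp [Matrix.mulVec, dotProduct]
    set T : Finset (Fin n) := Finset.univ.filter (fun j => A i j ≠ 0) with hT
    have hmemT : ∀ j, j ∈ T ↔ A i j ≠ 0 := by intro j; simp [hT]
    have hTcard : T.card ≤ 2 := by
      have h1 : {j | A i j ≠ 0} = (T : Set (Fin n)) := by ext j; simp [hmemT]
      have h2 := hA2 i
      rwa [h1, Set.ncard_coe_finset] at h2
    have hsum : ∀ v : Fin n → ℝ, A.mulVec v i = ∑ j ∈ T, A i j * v j := by
      intro v; rw [hmv]
      symm
      apply Finset.sum_subset (Finset.subset_univ T)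
      intro x _ hx
      have hz : A i x = 0 := by
        by_contra h; exact hx ((hmemT x).mpr h)
      rw [hz]; ring
    have hsign : ∀ j ∈ T, ∃ ε : ℤ, (ε = 1 ∨ ε = -1) ∧ A i j = (ε : ℝ) := by
      intro j hj
      rcases hA1 i j with h | h | h
      · exact ⟨-1, Or.inr rfl, by rw [h]; norm_num⟩
      · exact absurd h ((hmemT j).mp hj)
      · exact ⟨1, Or.inl rfl, by rw [h]; norm_num⟩
    have hcases : T.card = 0 ∨ T.card = 1 ∨ T.card = 2 := by omega
    rcases hcases with h | h | h
    · left
      rw [Finset.card_eq_zero] at h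
      intro v; rw [hsum v, h, Finset.sum_empty]
    · right; left
      rw [Finset.card_eq_one] at h
      obtain ⟨a, ha⟩ := h
      obtain ⟨ε, hε, hεa⟩ := hsign a (by rw [ha]; exact Finset.mem_singleton_self a)
      exact ⟨a, ε, hε, fun v => by rw [hsum v, ha, Finset.sum_singleton, hεa]⟩
    · right; right
      rw [Finset.card_eq_two] at h
      obtain ⟨a, c, hac, hTeq⟩ := h
      obtain ⟨ε, hε, hεa⟩ := hsign a (by rw [hTeq]; simp)
      obtain ⟨η, hη, hηc⟩ := hsign c (by rw [hTeq]; simp)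
      exact ⟨a, c, ε, η, hac, hε, hη, fun v => by
        rw [hsum v, hTeq, Finset.sum_pair hac, hεa, hηc]⟩
  -- Existence of an optimal integer solution z'
  set D : ℕ := ∏ j, (w j).den with hDdef
  have hDpos : 0 < D := Finset.prod_pos (fun j _ => (w j).den_pos)
  have hcw : ∀ j, ∃ c : ℤ, (c : ℚ) = w j * (D : ℚ) := by
    intro j
    obtain ⟨t, ht⟩ : (w j).den ∣ D := Finset.dvd_prod_of_mem _ (Finset.mem_univ j)
    refine ⟨(w j).num * t, ?_⟩
    have hden : ((w j).den : ℚ) ≠ 0 := by exact_mod_cast (w j).den_pos.ne'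
    have hnum : ((w j).num : ℚ) = w j * ((w j).den : ℚ) :=
      (div_eq_iff hden).mp (Rat.num_div_den (w j))
    rw [ht]; push_cast; rw [hnum]; ring
  choose c hc using hcw
  have hcR : ∀ j, ((c j : ℝ)) = (w j : ℝ) * (D : ℝ) := by
    intro j; exact_mod_cast congrArg (fun q : ℚ => (q : ℝ)) (hc j)
  have hobj : ∀ zz : Fin n → ℤ,
      ((∑ j, c j * zz j : ℤ) : ℝ) = (D : ℝ) * ∑ j, (w j : ℝ) * (zz j : ℝ) := by
    intro zz
    push_cast
    rw [Finset.mul_sum]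
    apply Finset.sum_congr rfl
    intro j _
    rw [hcR j]; ring
  have hlow : ∀ zz : Fin n → ℤ, (∀ i, (b i : ℝ) ≤ A.mulVec (fun j => (zz j : ℝ)) i) →
      ⌈(D : ℝ) * ∑ j, (w j : ℝ) * xstar j⌉ ≤ ∑ j, c j * zz j := by
    intro zz hzz
    rw [Int.ceil_le, hobj]
    exact mul_le_mul_of_nonneg_left (hxopt _ hzz) (by positivity)
  obtain ⟨lb, hlbP, hlbmin⟩ := Int.exists_least_of_bdd
    (P := fun tv : ℤ => ∃ zz : Fin n → ℤ,
      (∀ i, (b i : ℝ) ≤ A.mulVec (fun j => (zz j : ℝ)) i) ∧ ∑ j, c j * zz j = tv)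
    ⟨_, fun tv htv => by obtain ⟨zz, h1, h2⟩ := htv; exact h2 ▸ hlow zz h1⟩
    (by obtain ⟨z0, hz0⟩ := hfeas; exact ⟨_, z0, hz0, rfl⟩)
  obtain ⟨z', hz'feas, hz'val⟩ := hlbP
  have hz'min : ∀ zz : Fin n → ℤ, (∀ i, (b i : ℝ) ≤ A.mulVec (fun j => (zz j : ℝ)) i) →
      ∑ j, (w j : ℝ) * (z' j : ℝ) ≤ ∑ j, (w j : ℝ) * (zz j : ℝ) := by
    intro zz hzz
    have h1 : lb ≤ ∑ j, c j * zz j := hlbmin _ ⟨zz, hzz, rfl⟩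
    have h2 : ((lb : ℤ) : ℝ) ≤ ((∑ j, c j * zz j : ℤ) : ℝ) := Int.cast_le.mpr h1
    rw [← hz'val, hobj, hobj] at h2
    exact le_of_mul_le_mul_left h2 (by exact_mod_cast hDpos)
  -- The rounding z of xstar toward z'
  obtain ⟨z, hzdef⟩ : ∃ z : Fin n → ℤ,
      ∀ j, z j = if (z' j : ℝ) ≤ xstar j then ⌊xstar j⌋ else ⌈xstar j⌉ :=
    ⟨_, fun j => rfl⟩
  obtain ⟨e, hedef⟩ : ∃ e : Fin n → ℤ, ∀ j, e j = 2 * z j - K j := ⟨_, fun j => rfl⟩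
  have h2 : ∀ j, 2 * z j = K j + e j := by
    intro j; rw [hedef j]; ring
  have hejprop : ∀ j, e j = 0 ∨ (e j = -1 ∧ 2 * z' j ≤ K j - 1) ∨
      (e j = 1 ∧ K j + 1 ≤ 2 * z' j) := by
    intro j
    have hxj := hK j
    rcases Int.even_or_odd (K j) with ⟨a, ha⟩ | ⟨a, ha⟩
    · -- xstar j is an integer
      have hxa : xstar j = (a : ℝ) := by rw [hxj, ha]; push_cast; ring
      have hzj : z j = a := by
        rw [hzdef j]
        split_ifs <;> rw [hxa] <;> simp
      left
      rw [hedef j, hzj, ha]; ring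
    · -- xstar j = a + 1/2
      have hxa : xstar j = (a : ℝ) + 1/2 := by rw [hxj, ha]; push_cast; ring
      have hfl : ⌊xstar j⌋ = a := by
        rw [Int.floor_eq_iff]
        constructor
        · rw [hxa]; linarith
        · rw [hxa]; push_cast; linarith
      have hcl : ⌈xstar j⌉ = a + 1 := by
        rw [Int.ceil_eq_iff]
        constructor
        · rw [hxa]; push_cast; linarith
        · rw [hxa]; push_cast; linarith
      by_cases hle : (z' j : ℝ) ≤ xstar j
      · have hzj : z j = a := by rw [hzdef j, if_pos hle, hfl]
        have hz'a : z' j ≤ a := by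
          have h3 : z' j < a + 1 := by
            exact_mod_cast (show (z' j : ℝ) < ((a + 1 : ℤ) : ℝ) by
              rw [hxa] at hle; push_cast; linarith)
          omega
        right; left
        constructor
        · rw [hedef j, hzj, ha]; ring
        · omega
      · have hzj : z j = a + 1 := by rw [hzdef j, if_neg hle, hcl]
        have hz'a : a + 1 ≤ z' j := by
          push_neg at hle
          have h3 : a < z' j := by
            exact_mod_cast (show ((a : ℤ) : ℝ) < (z' j : ℝ) by
              rw [hxa] at hle; push_cast; linarith)
          omega
        right; right
        constructor
        · rw [hedef j, hzj, ha]; ring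
        · omega
  -- Feasibility of z
  have hzfeas : ∀ i, (b i : ℝ) ≤ A.mulVec (fun j => (z j : ℝ)) i := by
    intro i
    have hx := hxfeas i
    have hzp := hz'feas i
    rcases hstruct i with hrow | ⟨a, ε, hε, hrow⟩ | ⟨a, a2, ε, η, hne, hε, hη, hrow⟩
    · rw [hrow]; rw [hrow xstar] at hx; exact hx
    · rw [hrow xstar, hK a] at hx
      rw [hrow]
      have H1 : 2 * b i ≤ ε * K a := by
        have h' : ((2 * b i : ℤ) : ℝ) ≤ ((ε * K a : ℤ) : ℝ) := by
          push_cast; push_cast at hx; linarith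
        exact_mod_cast h'
      have h2a := h2 a
      have hea := hejprop a
      have H3 : b i ≤ ε * z a := by rcases hε with rfl | rfl <;> omega
      have h' : ((b i : ℤ) : ℝ) ≤ ((ε * z a : ℤ) : ℝ) := by exact_mod_cast H3
      push_cast at h' ⊢; linarith
    · rw [hrow xstar, hK a, hK a2] at hx
      rw [hrow] at hzp
      rw [hrow]
      have H1 : 2 * b i ≤ ε * K a + η * K a2 := by
        have h' : ((2 * b i : ℤ) : ℝ) ≤ ((ε * K a + η * K a2 : ℤ) : ℝ) := by
          push_cast; push_cast at hx; linarith
        exact_mod_cast h'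
      have H2 : b i ≤ ε * z' a + η * z' a2 := by
        have h' : ((b i : ℤ) : ℝ) ≤ ((ε * z' a + η * z' a2 : ℤ) : ℝ) := by
          push_cast; push_cast at hzp; linarith
        exact_mod_cast h'
      have h2a := h2 a
      have h2b := h2 a2
      have hea := hejprop a
      have heb := hejprop a2
      have H3 : b i ≤ ε * z a + η * z a2 := by
        rcases hε with rfl | rfl <;> rcases hη with rfl | rfl <;> omega
      have h' : ((b i : ℤ) : ℝ) ≤ ((ε * z a + η * z a2 : ℤ) : ℝ) := by exact_mod_cast H3
      push_cast at h' ⊢; linarith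
  -- Optimality of z versus z'
  have hoptz' : ∑ j, (w j : ℝ) * (z j : ℝ) ≤ ∑ j, (w j : ℝ) * (z' j : ℝ) := by
    by_contra hcon
    push_neg at hcon
    obtain ⟨dd, hdddef⟩ : ∃ dd : Fin n → ℝ, ∀ j, dd j = (z' j : ℝ) - (z j : ℝ) :=
      ⟨_, fun j => rfl⟩
    obtain ⟨S, hSdef⟩ : ∃ S : ℝ, S = ∑ j, |dd j| := ⟨_, rfl⟩
    have hS0 : 0 ≤ S := hSdef ▸ Finset.sum_nonneg (fun j _ => abs_nonneg _)
    obtain ⟨t, ht0, htS⟩ : ∃ t : ℝ, 0 < t ∧ t * S ≤ 1/2 :=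
      ⟨(2 * S + 2)⁻¹, by positivity, by
        rw [inv_mul_eq_div, div_le_iff₀ (by linarith)]; linarith⟩
    have hyfeas : ∀ i, (b i : ℝ) ≤ A.mulVec (fun j => xstar j + t * dd j) i := by
      intro i
      have hx := hxfeas i
      rcases eq_or_lt_of_le hx with heq | hlt
      · -- tight row
        rcases hstruct i with hrow | ⟨a, ε, hε, hrow⟩ | ⟨a, a2, ε, η, hne, hε, hη, hrow⟩
        · rw [hrow]; rw [hrow xstar] at heq; linarith
        · have heq0 : (b i : ℝ) = (ε : ℝ) * xstar a := by rw [heq, hrow xstar]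
          have heqK := heq0
          rw [hK a] at heqK
          have hzp := hz'feas i
          rw [hrow] at hzp
          have Hb : 2 * b i = ε * K a := by
            have h' : ((2 * b i : ℤ) : ℝ) = ((ε * K a : ℤ) : ℝ) := by
              push_cast; push_cast at heqK; linarith
            exact_mod_cast h'
          have Hz' : b i ≤ ε * z' a := by
            have h' : ((b i : ℤ) : ℝ) ≤ ((ε * z' a : ℤ) : ℝ) := by
              push_cast; push_cast at hzp; linarith
            exact_mod_cast h'
          have h2a := h2 a
          have hea := hejprop a
          have Hint : ε * z a ≤ ε * z' a := by rcases hε with rfl | rfl <;> omega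
          have h2' : ((ε * z a : ℤ) : ℝ) ≤ ((ε * z' a : ℤ) : ℝ) := by exact_mod_cast Hint
          push_cast at h2'
          have h0 : 0 ≤ (ε : ℝ) * dd a := by
            rw [hdddef a]; linarith [h2']
          have h0' : 0 ≤ t * ((ε : ℝ) * dd a) := mul_nonneg ht0.le h0
          have hfin : (b i : ℝ) ≤ (ε : ℝ) * (xstar a + t * dd a) := by
            have hexp : (ε : ℝ) * (xstar a + t * dd a)
                = (ε : ℝ) * xstar a + t * ((ε : ℝ) * dd a) := by ring
            rw [hexp]; linarith [heq0, h0']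
          exact hfin.trans (le_of_eq (hrow (fun j => xstar j + t * dd j)).symm)
        · have heq0 : (b i : ℝ) = (ε : ℝ) * xstar a + (η : ℝ) * xstar a2 := by
            rw [heq, hrow xstar]
          have heqK := heq0
          rw [hK a, hK a2] at heqK
          have hzp := hz'feas i
          rw [hrow] at hzp
          have Hb : 2 * b i = ε * K a + η * K a2 := by
            have h' : ((2 * b i : ℤ) : ℝ) = ((ε * K a + η * K a2 : ℤ) : ℝ) := by
              push_cast; push_cast at heqK; linarith
            exact_mod_cast h'
          have Hz' : b i ≤ ε * z' a + η * z' a2 := by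
            have h' : ((b i : ℤ) : ℝ) ≤ ((ε * z' a + η * z' a2 : ℤ) : ℝ) := by
              push_cast; push_cast at hzp; linarith
            exact_mod_cast h'
          have h2a := h2 a
          have h2b := h2 a2
          have hea := hejprop a
          have heb := hejprop a2
          have Hint : ε * z a + η * z a2 ≤ ε * z' a + η * z' a2 := by
            rcases hε with rfl | rfl <;> rcases hη with rfl | rfl <;> omega
          have h2' : ((ε * z a + η * z a2 : ℤ) : ℝ) ≤ ((ε * z' a + η * z' a2 : ℤ) : ℝ) := by
            exact_mod_cast Hint
          push_cast at h2'
          have h0 : 0 ≤ (ε : ℝ) * dd a + (η : ℝ) * dd a2 := by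
            rw [hdddef a, hdddef a2]; linarith [h2']
          have h0' : 0 ≤ t * ((ε : ℝ) * dd a + (η : ℝ) * dd a2) := mul_nonneg ht0.le h0
          have hfin : (b i : ℝ) ≤ (ε : ℝ) * (xstar a + t * dd a) + (η : ℝ) * (xstar a2 + t * dd a2) := by
            have hexp : (ε : ℝ) * (xstar a + t * dd a) + (η : ℝ) * (xstar a2 + t * dd a2)
                = ((ε : ℝ) * xstar a + (η : ℝ) * xstar a2)
                  + t * ((ε : ℝ) * dd a + (η : ℝ) * dd a2) := by ring
            rw [hexp]; linarith [heq0, h0']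
          exact hfin.trans (le_of_eq (hrow (fun j => xstar j + t * dd j)).symm)
      · -- slack row: slack is at least 1/2
        rcases hstruct i with hrow | ⟨a, ε, hε, hrow⟩ | ⟨a, a2, ε, η, hne, hε, hη, hrow⟩
        · rw [hrow]; rw [hrow xstar] at hlt; linarith
        · rw [hrow xstar, hK a] at hlt
          have Hb : 2 * b i + 1 ≤ ε * K a := by
            have h' : ((2 * b i : ℤ) : ℝ) < ((ε * K a : ℤ) : ℝ) := by
              push_cast; push_cast at hlt; linarith
            have h'' : 2 * b i < ε * K a := by exact_mod_cast h'
            omega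
          have hbK : (b i : ℝ) + 1/2 ≤ (ε : ℝ) * ((K a : ℝ) / 2) := by
            have h' : ((2 * b i + 1 : ℤ) : ℝ) ≤ ((ε * K a : ℤ) : ℝ) := by exact_mod_cast Hb
            push_cast at h'; linarith
          have habs1 : |dd a| ≤ S := by
            rw [hSdef]
            exact Finset.single_le_sum (fun j _ => abs_nonneg (dd j)) (Finset.mem_univ a)
          have hε1 : |(ε : ℝ)| = 1 := by rcases hε with rfl | rfl <;> norm_num
          have hXle : |(ε : ℝ) * dd a| ≤ S := by rw [abs_mul, hε1, one_mul]; exact habs1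
          have h1 : -S ≤ (ε : ℝ) * dd a := (abs_le.mp hXle).1
          have h2t : t * (-S) ≤ t * ((ε : ℝ) * dd a) := mul_le_mul_of_nonneg_left h1 ht0.le
          have hfin : (b i : ℝ) ≤ (ε : ℝ) * (xstar a + t * dd a) := by
            have hexp : (ε : ℝ) * (xstar a + t * dd a)
                = (ε : ℝ) * ((K a : ℝ) / 2) + t * ((ε : ℝ) * dd a) := by
              rw [← hK a]; ring
            rw [hexp]; linarith [hbK, h2t, htS]
          exact hfin.trans (le_of_eq (hrow (fun j => xstar j + t * dd j)).symm)
        · rw [hrow xstar, hK a, hK a2] at hlt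
          have Hb : 2 * b i + 1 ≤ ε * K a + η * K a2 := by
            have h' : ((2 * b i : ℤ) : ℝ) < ((ε * K a + η * K a2 : ℤ) : ℝ) := by
              push_cast; push_cast at hlt; linarith
            have h'' : 2 * b i < ε * K a + η * K a2 := by exact_mod_cast h'
            omega
          have hbK : (b i : ℝ) + 1/2 ≤ (ε : ℝ) * ((K a : ℝ) / 2) + (η : ℝ) * ((K a2 : ℝ) / 2) := by
            have h' : ((2 * b i + 1 : ℤ) : ℝ) ≤ ((ε * K a + η * K a2 : ℤ) : ℝ) := by
              exact_mod_cast Hb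
            push_cast at h'; linarith
          have habs1 : |dd a| + |dd a2| ≤ S := by
            have hsub : ({a, a2} : Finset (Fin n)) ⊆ Finset.univ := Finset.subset_univ _
            have hmono := Finset.sum_le_sum_of_subset_of_nonneg hsub
              (fun j _ _ => abs_nonneg (dd j))
            rw [Finset.sum_pair hne] at hmono
            rw [hSdef]
            exact hmono
          have hε1 : |(ε : ℝ)| = 1 := by rcases hε with rfl | rfl <;> norm_num
          have hη1 : |(η : ℝ)| = 1 := by rcases hη with rfl | rfl <;> norm_num
          have hXle : |(ε : ℝ) * dd a + (η : ℝ) * dd a2| ≤ S := by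
            calc |(ε : ℝ) * dd a + (η : ℝ) * dd a2|
                ≤ |(ε : ℝ) * dd a| + |(η : ℝ) * dd a2| := abs_add_le _ _
              _ = |dd a| + |dd a2| := by rw [abs_mul, abs_mul, hε1, hη1, one_mul, one_mul]
              _ ≤ S := habs1
          have h1 : -S ≤ (ε : ℝ) * dd a + (η : ℝ) * dd a2 := (abs_le.mp hXle).1
          have h2t : t * (-S) ≤ t * ((ε : ℝ) * dd a + (η : ℝ) * dd a2) :=
            mul_le_mul_of_nonneg_left h1 ht0.le
          have hfin : (b i : ℝ) ≤ (ε : ℝ) * (xstar a + t * dd a) + (η : ℝ) * (xstar a2 + t * dd a2) := by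
            have hexp : (ε : ℝ) * (xstar a + t * dd a) + (η : ℝ) * (xstar a2 + t * dd a2)
                = ((ε : ℝ) * ((K a : ℝ) / 2) + (η : ℝ) * ((K a2 : ℝ) / 2))
                  + t * ((ε : ℝ) * dd a + (η : ℝ) * dd a2) := by
              rw [← hK a, ← hK a2]; ring
            rw [hexp]; linarith [hbK, h2t, htS]
          exact hfin.trans (le_of_eq (hrow (fun j => xstar j + t * dd j)).symm)
    have hxy := hxopt _ hyfeas
    have hsplit : ∑ j, (w j : ℝ) * (xstar j + t * dd j)
        = (∑ j, (w j : ℝ) * xstar j)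
          + t * ((∑ j, (w j : ℝ) * (z' j : ℝ)) - ∑ j, (w j : ℝ) * (z j : ℝ)) := by
      rw [← Finset.sum_sub_distrib, Finset.mul_sum, ← Finset.sum_add_distrib]
      apply Finset.sum_congr rfl
      intro j _
      rw [hdddef j]; ring
    rw [hsplit] at hxy
    have hneg : t * ((∑ j, (w j : ℝ) * (z' j : ℝ)) - ∑ j, (w j : ℝ) * (z j : ℝ)) < 0 :=
      mul_neg_of_pos_of_neg ht0 (by linarith)
    linarith
  -- Assemble
  refine ⟨z, hzfeas, ?_, ?_⟩
  · intro z'' hz''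
    exact le_trans hoptz' (hz'min z'' hz'')
  · intro j
    have h2j := h2 j
    have hds : (z j : ℝ) - xstar j = (e j : ℝ) / 2 := by
      have h' : ((2 * z j : ℤ) : ℝ) = ((K j + e j : ℤ) : ℝ) := by exact_mod_cast h2j
      push_cast at h'
      rw [hK j]
      linarith
    rcases hejprop j with h | ⟨h, _⟩ | ⟨h, _⟩ <;> rw [hds, h] <;> norm_num [abs_le]
end
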